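/- arXiv:2302.08862 — 8 statements merged into one kernel-verified Lean document; each statement's English description precedes it below -/
import Mathlib

section
/- Let G be a finite simple graph and let A and B be two disjoint vertex sets of G. Then D = V(G) \ A is a super dominating set of G having B as a core if and only if the set E_G[A,B] of edges of G with one endpoint in A and the other in B is a matching that covers all vertices of A ∪ B. -/
open SimpleGraph

/-- `D` is a super dominating set of `G`: a dominating set such that every vertex `x`
outside `D` is super dominated by some `y ∈ D`, i.e. `N_G(y) ∩ (V \ D) = {x}`. -/
def IsSuperDominating {V : Type*} (G : SimpleGraph V) (D : Set V) : Prop :=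
  (∀ x ∉ D, ∃ y ∈ D, G.Adj y x) ∧
  (∀ x ∉ D, ∃ y ∈ D, G.neighborSet y ∩ Dᶜ = {x})

/-- `Dstar` is a core of the super dominating set `D`: the image of a function assigning
to each `u ∉ D` a vertex `u' ∈ D` with `N_G(u') ∩ (V \ D) = {u}`. -/
def IsCore {V : Type*} (G : SimpleGraph V) (D Dstar : Set V) : Prop :=
  ∃ f : V → V, (∀ u ∉ D, f u ∈ D ∧ G.neighborSet (f u) ∩ Dᶜ = {u}) ∧
    Dstar = f '' Dᶜ

/-- The super domination number: the minimum cardinality of a super dominating set. -/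
noncomputable def superDominationNumber {V : Type*} (G : SimpleGraph V) : ℕ :=
  sInf {n | ∃ D : Set V, IsSuperDominating G D ∧ D.ncard = n}

/-- `M` is a matching of `G`, viewed as a set of pairwise disjoint edges. -/
def IsMatchingSet {V : Type*} (G : SimpleGraph V) (M : Set (Sym2 V)) : Prop :=
  M ⊆ G.edgeSet ∧ ∀ e ∈ M, ∀ f ∈ M, e ≠ f → ∀ v : V, v ∈ e → v ∉ f

/-- The set of vertices covered by a set of edges `M`. -/
def matchingCovered {V : Type*} (M : Set (Sym2 V)) : Set V := {v | ∃ e ∈ M, v ∈ e}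

/-- The matching number `α'(G)`: the maximum size of a matching in `G`. -/
noncomputable def matchingNumber {V : Type*} (G : SimpleGraph V) : ℕ :=
  sSup {n | ∃ M : Set (Sym2 V), IsMatchingSet G M ∧ M.ncard = n}

/-- `E_G[A,B]`: the set of edges of `G` with one endpoint in `A` and the other in `B`. -/
def edgesBetween {V : Type*} (G : SimpleGraph V) (A B : Set V) : Set (Sym2 V) :=
  {e | e ∈ G.edgeSet ∧ ∃ a ∈ A, ∃ b ∈ B, e = s(a, b)}

/-- For disjoint vertex sets `A`, `B` of a finite simple graph `G`:
`D = V(G) \ A` is a super dominating set with core `B` iff `E_G[A,B]` is a matching that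
covers all vertices of `A ∪ B`. -/
theorem superDominating_core_iff_matching {V : Type*} [Fintype V]
    (G : SimpleGraph V) (A B : Set V) (hAB : Disjoint A B) :
    (IsSuperDominating G Aᶜ ∧ IsCore G Aᶜ B) ↔
      (IsMatchingSet G (edgesBetween G A B) ∧
        A ∪ B ⊆ matchingCovered (edgesBetween G A B)) := by
  classical
  have hdisj : ∀ x ∈ A, x ∉ B := fun x hx => Set.disjoint_left.mp hAB hx
  constructor
  · rintro ⟨⟨hdom, hsup⟩, f, hf, hB⟩
    rw [compl_compl] at hB
    have hf' : ∀ u ∈ A, f u ∈ Aᶜ ∧ G.neighborSet (f u) ∩ A = {u} := by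
      intro u hu
      have := hf u (by simpa using hu)
      simpa [compl_compl] using this
    have huniq : ∀ b ∈ B, ∀ a ∈ A, G.Adj b a → f a = b := by
      intro b hb a ha hadj
      rw [hB] at hb
      obtain ⟨c, hc, rfl⟩ := hb
      have h2 := (hf' c hc).2
      have h3 : a ∈ G.neighborSet (f c) ∩ A := ⟨hadj, ha⟩
      rw [h2] at h3
      simp only [Set.mem_singleton_iff] at h3
      rw [h3]
    have hadjA : ∀ a ∈ A, G.Adj (f a) a := by
      intro a ha
      have h2 := (hf' a ha).2
      have h3 : a ∈ G.neighborSet (f a) ∩ A := by rw [h2]; rfl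
      exact h3.1
    have hmemE : ∀ a ∈ A, s(a, f a) ∈ edgesBetween G A B := by
      intro a ha
      refine ⟨(hadjA a ha).symm, a, ha, f a, ?_, rfl⟩
      rw [hB]; exact ⟨a, ha, rfl⟩
    constructor
    · constructor
      · intro e he; exact he.1
      · rintro e he e' he' hne v hv hv'
        obtain ⟨heE, a, ha, b, hb, rfl⟩ := he
        obtain ⟨heE', a', ha', b', hb', rfl⟩ := he'
        rw [SimpleGraph.mem_edgeSet] at heE heE'
        apply hne
        rw [Sym2.mem_iff] at hv hv'
        rcases hv with rfl | rfl
        · rcases hv' with rfl | rfl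
          · have h1 := huniq b hb v ha heE.symm
            have h2 := huniq b' hb' v ha' heE'.symm
            rw [← h1, ← h2]
          · exact absurd hb' (hdisj v ha)
        · rcases hv' with rfl | rfl
          · exact absurd hb (hdisj v ha')
          · rw [hB] at hb
            obtain ⟨c, hc, rfl⟩ := hb
            have h2 := (hf' c hc).2
            have h3 : a ∈ G.neighborSet (f c) ∩ A := ⟨heE.symm, ha⟩
            have h4 : a' ∈ G.neighborSet (f c) ∩ A := ⟨heE'.symm, ha'⟩
            rw [h2] at h3 h4
            simp only [Set.mem_singleton_iff] at h3 h4
            rw [h3, h4]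
    · intro v hv
      rcases hv with hv | hv
      · exact ⟨s(v, f v), hmemE v hv, Sym2.mem_mk_left _ _⟩
      · rw [hB] at hv
        obtain ⟨c, hc, rfl⟩ := hv
        exact ⟨s(c, f c), hmemE c hc, Sym2.mem_mk_right _ _⟩
  · rintro ⟨⟨hE, hM⟩, hcov⟩
    have hA : ∀ a : V, ∃ b : V, a ∈ A → b ∈ B ∧ s(a, b) ∈ edgesBetween G A B := by
      intro a
      by_cases ha : a ∈ A
      · obtain ⟨e, he, hae⟩ := hcov (Or.inl ha)
        obtain ⟨heE, a', ha', b', hb', rfl⟩ := he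
        rw [Sym2.mem_iff] at hae
        rcases hae with rfl | rfl
        · exact ⟨b', fun _ => ⟨hb', heE, a, ha, b', hb', rfl⟩⟩
        · exact absurd hb' (hdisj a ha)
      · exact ⟨a, fun h => absurd h ha⟩
    choose g hg using hA
    have hgB : ∀ a ∈ A, g a ∈ B := fun a ha => (hg a ha).1
    have hgM : ∀ a ∈ A, s(a, g a) ∈ edgesBetween G A B := fun a ha => (hg a ha).2
    have hgne : ∀ a ∈ A, a ≠ g a := fun a ha h => hdisj a ha (h ▸ hgB a ha)
    have huniq : ∀ a ∈ A, ∀ b ∈ B, s(a, b) ∈ edgesBetween G A B → b = g a := by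
      intro a ha b hb hmem
      by_contra hne
      have hne' : s(a, b) ≠ s(a, g a) := by
        simp only [ne_eq, Sym2.eq_iff, not_or]
        exact ⟨fun h => hne h.2, fun h => hgne a ha h.1⟩
      exact hM _ hmem _ (hgM a ha) hne' a (Sym2.mem_mk_left _ _) (Sym2.mem_mk_left _ _)
    have huniq2 : ∀ a ∈ A, ∀ z ∈ A, s(z, g a) ∈ edgesBetween G A B → z = a := by
      intro a ha z hz hmem
      by_contra hne
      have hne' : s(z, g a) ≠ s(a, g a) := by
        simp only [ne_eq, Sym2.eq_iff, not_or]
        exact ⟨fun h => hne h.1, fun h => hdisj z hz (h.1.symm ▸ hgB a ha)⟩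
      exact hM _ hmem _ (hgM a ha) hne' (g a) (Sym2.mem_mk_right _ _) (Sym2.mem_mk_right _ _)
    have hadj : ∀ a ∈ A, G.Adj a (g a) := by
      intro a ha
      have := hE (hgM a ha)
      rwa [SimpleGraph.mem_edgeSet] at this
    have hsingle : ∀ x ∈ A, G.neighborSet (g x) ∩ A = {x} := by
      intro x hx
      ext z
      simp only [Set.mem_inter_iff, SimpleGraph.mem_neighborSet, Set.mem_singleton_iff]
      constructor
      · rintro ⟨hzadj, hzA⟩
        have hmem : s(z, g x) ∈ edgesBetween G A B :=
          ⟨G.mem_edgeSet.mpr hzadj.symm, z, hzA, g x, hgB x hx, rfl⟩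
        exact huniq2 x hx z hzA hmem
      · rintro rfl
        exact ⟨(hadj z hx).symm, hx⟩
    constructor
    · constructor
      · intro x hx
        rw [Set.notMem_compl_iff] at hx
        exact ⟨g x, fun h => hdisj (g x) h (hgB x hx), (hadj x hx).symm⟩
      · intro x hx
        rw [Set.notMem_compl_iff] at hx
        refine ⟨g x, fun h => hdisj (g x) h (hgB x hx), ?_⟩
        rw [compl_compl]
        exact hsingle x hx
    · refine ⟨g, ?_, ?_⟩
      · intro u hu
        rw [Set.notMem_compl_iff] at hu
        refine ⟨fun h => hdisj (g u) h (hgB u hu), ?_⟩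
        rw [compl_compl]
        exact hsingle u hu
      · rw [compl_compl]
        apply Set.eq_of_subset_of_subset
        · intro b hb
          obtain ⟨e, he, hbe⟩ := hcov (Or.inr hb)
          obtain ⟨heE, a', ha', b', hb', rfl⟩ := he
          rw [Sym2.mem_iff] at hbe
          rcases hbe with rfl | rfl
          · exact absurd hb (hdisj b ha')
          · exact ⟨a', ha', (huniq a' ha' b hb ⟨heE, a', ha', b, hb, rfl⟩).symm⟩
        · rintro b ⟨a, ha, rfl⟩
          exact hgB a ha
end

section
/- If D is a super dominating set of a finite simple graph G and D* is a core of D, then (D \ D*) ∪ (V(G) \ D) is also a super dominating set of G, and it has the same cardinality as D. In particular, if D is a minimum super dominating set, then so is (D \ D*) ∪ (V(G) \ D). -/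
open SimpleGraph

/-- If `D` is a super dominating set of `G` with core `D*`, then
`(D \ D*) ∪ (V \ D)` is also a super dominating set of the same cardinality; in
particular it is minimum whenever `D` is. -/
theorem exchange_superDominating {V : Type*} [Fintype V]
    (G : SimpleGraph V) (D Dstar : Set V)
    (hD : IsSuperDominating G D) (hcore : IsCore G D Dstar) :
    IsSuperDominating G ((D \ Dstar) ∪ Dᶜ) ∧
    ((D \ Dstar) ∪ Dᶜ).ncard = D.ncard ∧
    (D.ncard = superDominationNumber G →
      ((D \ Dstar) ∪ Dᶜ).ncard = superDominationNumber G) := by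
  obtain ⟨f, hf, hDstar⟩ := hcore
  have hsub : Dstar ⊆ D := by
    rintro x hx
    rw [hDstar] at hx
    obtain ⟨u, hu, rfl⟩ := hx
    exact (hf u hu).1
  have hcompl : ((D \ Dstar) ∪ Dᶜ)ᶜ = Dstar := by
    ext x
    simp only [Set.mem_compl_iff, Set.mem_union, Set.mem_diff, not_or, not_and, not_not]
    constructor
    · rintro ⟨h1, h2⟩; exact h1 h2
    · intro hx; exact ⟨fun _ => hx, hsub hx⟩
  have hadj : ∀ u ∉ D, G.Adj (f u) u := by
    intro u hu
    have h := (hf u hu).2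
    have : u ∈ G.neighborSet (f u) ∩ Dᶜ := by rw [h]; rfl
    exact this.1
  have hne : ∀ w ∈ Dstar, ∀ u ∉ D, G.Adj u w → w = f u := by
    intro w hw u hu hadj'
    rw [hDstar] at hw
    obtain ⟨v, hv, rfl⟩ := hw
    have : u ∈ G.neighborSet (f v) ∩ Dᶜ := ⟨hadj'.symm, hu⟩
    rw [(hf v hv).2, Set.mem_singleton_iff] at this
    rw [this]
  have hsdom : IsSuperDominating G ((D \ Dstar) ∪ Dᶜ) := by
    constructor
    · intro x hx
      have hx' : x ∈ Dstar := by rw [← hcompl]; exact hx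
      rw [hDstar] at hx'
      obtain ⟨u, hu, rfl⟩ := hx'
      exact ⟨u, Or.inr hu, (hadj u hu).symm⟩
    · intro x hx
      have hx' : x ∈ Dstar := by rw [← hcompl]; exact hx
      have hx2 := hx'
      rw [hDstar] at hx2
      obtain ⟨u, hu, rfl⟩ := hx2
      refine ⟨u, Or.inr hu, ?_⟩
      rw [hcompl]
      ext w
      constructor
      · rintro ⟨h1, h2⟩
        exact hne w h2 u hu h1
      · rintro rfl
        exact ⟨(hadj u hu).symm, by rw [hDstar]; exact ⟨u, hu, rfl⟩⟩
  have hinj : Set.InjOn f Dᶜ := by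
    intro u hu v hv h
    have h1 := (hf u hu).2
    have h2 := (hf v hv).2
    rw [h] at h1
    rw [h1] at h2
    exact (Set.singleton_eq_singleton_iff.mp h2)
  have hcardstar : Dstar.ncard = Dᶜ.ncard := by
    rw [hDstar, Set.ncard_image_of_injOn hinj]
  have hcard : ((D \ Dstar) ∪ Dᶜ).ncard = D.ncard := by
    rw [Set.ncard_union_eq (by
      exact Set.disjoint_compl_right_iff_subset.mpr Set.diff_subset)
      (Set.toFinite _) (Set.toFinite _), ← hcardstar,
      Set.ncard_diff_add_ncard_of_subset hsub]
  exact ⟨hsdom, hcard, fun h => hcard.trans h⟩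
end

section
/- For every finite simple graph G and every vertex v of G, there exists a super dominating set of G of minimum cardinality (i.e., of cardinality γ_sp(G)) that contains v. -/
open SimpleGraph

/-- Every vertex of a finite simple graph `G` is contained in some
minimum super dominating set of `G`. -/
theorem exists_minimum_superDominating_mem {V : Type*} [Fintype V]
    (G : SimpleGraph V) (v : V) :
    ∃ D : Set V, IsSuperDominating G D ∧ D.ncard = superDominationNumber G ∧ v ∈ D := by
  classical
  -- The whole vertex set is super dominating, so the defining set is nonempty.
  have huniv : IsSuperDominating G (Set.univ : Set V) := by
    constructor <;> intro x hx <;> exact absurd (Set.mem_univ x) hx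
  have hne : {n | ∃ D : Set V, IsSuperDominating G D ∧ D.ncard = n}.Nonempty :=
    ⟨(Set.univ : Set V).ncard, Set.univ, huniv, rfl⟩
  obtain ⟨D, hD, hcard⟩ := Nat.sInf_mem hne
  by_cases hv : v ∈ D
  · exact ⟨D, hD, hcard, hv⟩
  -- choose a super-dominator f u for each u ∉ D
  have hch : ∀ u : V, u ∉ D → ∃ y, y ∈ D ∧ G.neighborSet y ∩ Dᶜ = {u} := by
    intro u hu
    obtain ⟨y, hy1, hy2⟩ := hD.2 u hu
    exact ⟨y, hy1, hy2⟩
  set f : V → V := fun u => if h : u ∉ D then (hch u h).choose else u with hf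
  have hfD : ∀ u ∉ D, f u ∈ D := by
    intro u hu; simp only [hf, dif_pos hu]; exact (hch u hu).choose_spec.1
  have hfN : ∀ u ∉ D, G.neighborSet (f u) ∩ Dᶜ = {u} := by
    intro u hu; simp only [hf, dif_pos hu]; exact (hch u hu).choose_spec.2
  have hadj : ∀ u ∉ D, G.Adj (f u) u := by
    intro u hu
    have : u ∈ G.neighborSet (f u) ∩ Dᶜ := by rw [hfN u hu]; rfl
    exact this.1
  have hinj : Set.InjOn f Dᶜ := by
    intro a ha b hb hab
    have h1 : ({a} : Set V) = {b} := by rw [← hfN a ha, ← hfN b hb, hab]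
    simpa using h1
  set Dstar : Set V := f '' Dᶜ with hDstar
  have hsub : Dstar ⊆ D := by
    rintro _ ⟨u, hu, rfl⟩; exact hfD u hu
  set D' : Set V := Dᶜ ∪ (D \ Dstar) with hD'
  have hcompl : D'ᶜ = Dstar := by
    ext x
    simp only [hD', Set.mem_compl_iff, Set.mem_union, Set.mem_diff, not_or, not_and,
      not_not]
    constructor
    · rintro ⟨hx1, hx2⟩; exact hx2 hx1
    · intro hx; exact ⟨hsub hx, fun _ => hx⟩
  have hkey : ∀ x ∉ D', ∃ u, u ∈ D' ∧ G.Adj u x ∧ G.neighborSet u ∩ D'ᶜ = {x} := by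
    intro x hx
    have hx' : x ∈ Dstar := by rw [← hcompl]; exact hx
    obtain ⟨u, hu, rfl⟩ := hx'
    refine ⟨u, Or.inl hu, (hadj u hu).symm, ?_⟩
    rw [hcompl]
    ext z
    simp only [Set.mem_inter_iff, Set.mem_singleton_iff, SimpleGraph.mem_neighborSet]
    constructor
    · rintro ⟨hz1, hz2⟩
      obtain ⟨w, hw, rfl⟩ := hz2
      have : u ∈ G.neighborSet (f w) ∩ Dᶜ := ⟨hz1.symm, hu⟩
      rw [hfN w hw] at this
      rw [Set.mem_singleton_iff.mp this]
    · rintro rfl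
      exact ⟨(hadj u hu).symm, ⟨u, hu, rfl⟩⟩
  have hSD : IsSuperDominating G D' := by
    constructor
    · intro x hx
      obtain ⟨u, h1, h2, _⟩ := hkey x hx
      exact ⟨u, h1, h2⟩
    · intro x hx
      obtain ⟨u, h1, _, h3⟩ := hkey x hx
      exact ⟨u, h1, h3⟩
  -- cardinality
  have hstar : Dstar.ncard = Dᶜ.ncard := Set.ncard_image_of_injOn hinj
  have h1 : D'.ncard + D'ᶜ.ncard = Nat.card V := Set.ncard_add_ncard_compl D'
  have h2 : D.ncard + Dᶜ.ncard = Nat.card V := Set.ncard_add_ncard_compl D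
  rw [hcompl, hstar] at h1
  have hcard' : D'.ncard = superDominationNumber G := by
    rw [superDominationNumber, ← hcard]; omega
  exact ⟨D', hSD, hcard', Or.inl hv⟩
end

section
/- If T is a finite tree (a finite connected acyclic simple graph), then γ_sp(T) = n(T) − α'(T), where n(T) is the number of vertices of T and α'(T) is the matching number of T. -/
open SimpleGraph

lemma tree_parity_step {V : Type*} (T : SimpleGraph V) (hT : T.IsTree)
    (M : Set (Sym2 V)) [DecidablePred (· ∈ M)] {r : V}
    (P : ∀ v : V, T.Walk r v) (hP : ∀ v, (P v).IsPath)
    (hPu : ∀ v (q : T.Walk r v), q.IsPath → q = P v) :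
    ∀ u v, T.Adj u v →
      ((P v).edges.countP (fun e => decide (e ∈ M)) =
        (P u).edges.countP (fun e => decide (e ∈ M)) + (if s(u,v) ∈ M then 1 else 0)) ∨
      ((P u).edges.countP (fun e => decide (e ∈ M)) =
        (P v).edges.countP (fun e => decide (e ∈ M)) + (if s(u,v) ∈ M then 1 else 0)) := by
  classical
  intro u v h
  by_cases hv : v ∈ (P u).support
  · right
    have hq : ((P u).takeUntil v hv).IsPath := (hP u).takeUntil hv
    have hd : ((P u).dropUntil v hv).IsPath := (hP u).dropUntil hv
    have hsingle : (Walk.cons h.symm Walk.nil : T.Walk v u).IsPath := by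
      rw [Walk.cons_isPath_iff]
      refine ⟨Walk.IsPath.nil, ?_⟩
      simp [h.symm.ne]
    have hdrop : (P u).dropUntil v hv = Walk.cons h.symm Walk.nil := by
      have := hT.IsAcyclic.path_unique ⟨_, hd⟩ ⟨_, hsingle⟩
      exact congrArg Subtype.val this
    have hspec := (P u).take_spec hv
    have hedges : (P u).edges = ((P u).takeUntil v hv).edges ++ [s(v,u)] := by
      conv_lhs => rw [← hspec]
      rw [Walk.edges_append, hdrop]
      simp
    have hqP : (P u).takeUntil v hv = P v := hPu v _ hq
    rw [hedges, hqP, List.countP_append]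
    simp [List.countP_cons, Sym2.eq_swap (a := v) (b := u)]
  · left
    have hcp : ((P u).concat h).IsPath := by
      rw [← Walk.isPath_reverse_iff, Walk.reverse_concat, Walk.cons_isPath_iff]
      refine ⟨(hP u).reverse, ?_⟩
      rwa [Walk.support_reverse, List.mem_reverse]
    have : (P u).concat h = P v := hPu v _ hcp
    rw [← this, Walk.edges_concat, List.concat_eq_append, List.countP_append]
    simp [List.countP_cons]

lemma matchingSet_bdd {V : Type*} [Fintype V] (G : SimpleGraph V) :
    BddAbove {n | ∃ M : Set (Sym2 V), IsMatchingSet G M ∧ M.ncard = n} := by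
  refine ⟨Nat.card (Sym2 V), ?_⟩
  rintro n ⟨M, hM, rfl⟩
  calc M.ncard ≤ (Set.univ : Set (Sym2 V)).ncard :=
        Set.ncard_le_ncard (Set.subset_univ _) (Set.toFinite _)
    _ = Nat.card (Sym2 V) := Set.ncard_univ _

lemma superDominating_lower {V : Type*} [Fintype V] (G : SimpleGraph V) {D : Set V}
    (hD : IsSuperDominating G D) :
    Nat.card V - matchingNumber G ≤ D.ncard := by
  classical
  obtain ⟨-, h2⟩ := hD
  have h2' : ∀ x : V, ∃ y : V, x ∈ Dᶜ → y ∈ D ∧ G.neighborSet y ∩ Dᶜ = {x} := by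
    intro x
    by_cases hx : x ∈ D
    · exact ⟨x, fun hc => absurd hx hc⟩
    · obtain ⟨y, hy1, hy2⟩ := h2 x hx
      exact ⟨y, fun _ => ⟨hy1, hy2⟩⟩
  choose f hf using h2'
  have hfx : ∀ x ∈ Dᶜ, x ∈ G.neighborSet (f x) ∩ Dᶜ := by
    intro x hx
    rw [(hf x hx).2]
    rfl
  set M : Set (Sym2 V) := (fun x => s(x, f x)) '' Dᶜ with hMdef
  have hMatch : IsMatchingSet G M := by
    constructor
    · rintro e ⟨x, hx, rfl⟩
      rw [SimpleGraph.mem_edgeSet]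
      exact ((hfx x hx).1 : G.Adj (f x) x).symm
    · rintro e ⟨x, hx, rfl⟩ e' ⟨x', hx', rfl⟩ hne v hv hv'
      rw [Sym2.mem_iff] at hv hv'
      have hxD := (hf x hx).1
      have hx'D := (hf x' hx').1
      rcases hv with rfl | hfv <;> rcases hv' with h | h
      · exact hne (by rw [h])
      · exact hx ((h ▸ hx'D))
      · rw [hfv] at h; exact hx' (h ▸ hxD)
      · rw [hfv] at h
        have hx1 : ({x} : Set V) = {x'} := by
          rw [← (hf x hx).2, h, (hf x' hx').2]
        have hxx : x = x' := by simpa using hx1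
        exact hne (by rw [hxx])
  have hinj : Set.InjOn (fun x => s(x, f x)) Dᶜ := by
    intro x hx x' hx' h
    simp only [Sym2.eq_iff] at h
    rcases h with ⟨h1, -⟩ | ⟨h1, h2⟩
    · exact h1
    · exact absurd ((h1 ▸ (hf x' hx').1) : x ∈ D) hx
  have hMcard : M.ncard = Dᶜ.ncard := Set.ncard_image_of_injOn hinj
  have hle : Dᶜ.ncard ≤ matchingNumber G :=
    le_csSup (matchingSet_bdd G) ⟨M, hMatch, hMcard⟩
  have hcc : D.ncard + Dᶜ.ncard = Nat.card V := Set.ncard_add_ncard_compl D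
  omega

lemma superDominating_upper {V : Type*} [Fintype V] (T : SimpleGraph V) (hT : T.IsTree) :
    ∃ D : Set V, IsSuperDominating T D ∧ D.ncard = Nat.card V - matchingNumber T := by
  classical
  have hne : ({n | ∃ M : Set (Sym2 V), IsMatchingSet T M ∧ M.ncard = n}).Nonempty :=
    ⟨0, ∅, ⟨Set.empty_subset _, by simp⟩, by simp⟩
  have hmem : matchingNumber T ∈ {n | ∃ M : Set (Sym2 V), IsMatchingSet T M ∧ M.ncard = n} :=
    Nat.sSup_mem hne (matchingSet_bdd T)
  obtain ⟨M, hM, hMcard⟩ := hmem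
  haveI : Nonempty V := hT.isConnected.nonempty
  set r := Classical.arbitrary V with hrdef
  set P : ∀ v : V, T.Walk r v := fun v => (hT.existsUnique_path r v).choose with hPdef
  have hP : ∀ v, (P v).IsPath := fun v => (hT.existsUnique_path r v).choose_spec.1
  have hPu : ∀ v (q : T.Walk r v), q.IsPath → q = P v := fun v q hq =>
    (hT.existsUnique_path r v).choose_spec.2 q hq
  set d : V → ℕ := fun v => (P v).edges.countP (fun e => decide (e ∈ M)) with hddef
  have hstep' : ∀ u v, T.Adj u v →
      (d v = d u + (if s(u,v) ∈ M then 1 else 0)) ∨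
      (d u = d v + (if s(u,v) ∈ M then 1 else 0)) := by
    simpa only [hddef] using tree_parity_step T hT M P hP hPu
  have hpar : ∀ u v, T.Adj u v → (d u % 2 = d v % 2 ↔ s(u,v) ∉ M) := by
    intro u v h
    rcases hstep' u v h with h1 | h1 <;> by_cases hm : s(u,v) ∈ M <;>
      simp only [hm, if_true, if_neg, not_true, not_false_iff, iff_true, iff_false] <;>
      simp [hm] at h1 <;> omega
  have huniq : ∀ (v : V) (e e' : Sym2 V), e ∈ M → e' ∈ M → v ∈ e → v ∈ e' → e = e' := by
    intro v e e' he he' hv hv'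
    by_contra hne'
    exact hM.2 e he e' he' hne' v hv hv'
  have hadj : ∀ a b, s(a,b) ∈ M → T.Adj a b := fun a b h =>
    (SimpleGraph.mem_edgeSet T).mp (hM.1 h)
  have hendp : ∀ a b, s(a,b) ∈ M → ¬ (d a % 2 = d b % 2) := by
    intro a b hm hc
    exact (hpar a b (hadj a b hm)).mp hc hm
  set S := {v : V | (∃ e ∈ M, v ∈ e) ∧ d v % 2 = 1} with hSdef
  set g : V → Sym2 V := fun v => if h : ∃ e ∈ M, v ∈ e then h.choose else s(v,v) with hgdef
  have hg : ∀ (v : V) (h : ∃ e ∈ M, v ∈ e), g v ∈ M ∧ v ∈ g v := by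
    intro v h
    simp only [hgdef, dif_pos h]
    exact ⟨h.choose_spec.1, h.choose_spec.2⟩
  have himg : g '' S = M := by
    apply Set.Subset.antisymm
    · rintro e ⟨v, ⟨hv, -⟩, rfl⟩
      exact (hg v hv).1
    · intro e he
      have hrep : ∀ a b, s(a,b) ∈ M → s(a,b) ∈ g '' S := by
        intro a b hmab
        have hne' := hendp a b hmab
        have h01 : d a % 2 = 1 ∨ d b % 2 = 1 := by omega
        rcases h01 with h1 | h1
        · have hex : ∃ e ∈ M, a ∈ e := ⟨s(a,b), hmab, Sym2.mem_mk_left a b⟩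
          exact ⟨a, ⟨hex, h1⟩, huniq a _ _ (hg a hex).1 hmab (hg a hex).2 (Sym2.mem_mk_left a b)⟩
        · have hex : ∃ e ∈ M, b ∈ e := ⟨s(a,b), hmab, Sym2.mem_mk_right a b⟩
          exact ⟨b, ⟨hex, h1⟩, huniq b _ _ (hg b hex).1 hmab (hg b hex).2 (Sym2.mem_mk_right a b)⟩
      revert he
      induction e using Sym2.ind with
      | _ a b => exact hrep a b
  have hinjOn : Set.InjOn g S := by
    rintro v ⟨hvM, hvo⟩ v' ⟨hv'M, hv'o⟩ hgv
    have h1 := hg v hvM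
    have h2 := hg v' hv'M
    rw [hgv] at h1
    obtain ⟨b, hb⟩ := Sym2.mem_iff_exists.mp h2.2
    rw [hb] at h1
    rcases Sym2.mem_iff.mp h1.2 with h | h
    · exact h
    · subst h
      rw [hb] at h2
      exact absurd (by omega : d v' % 2 = d v % 2) (hendp v' v h2.1)
  have hScard : S.ncard = M.ncard := by
    rw [← himg]
    exact (Set.ncard_image_of_injOn hinjOn).symm
  have hsum : S.ncard + Sᶜ.ncard = Nat.card V := Set.ncard_add_ncard_compl S
  have hdom : ∀ x ∉ Sᶜ, ∃ y ∈ Sᶜ, T.Adj y x ∧ T.neighborSet y ∩ S = {x} := by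
    intro x hx
    have hxS : x ∈ S := by simpa using hx
    obtain ⟨⟨e, he, hxe⟩, hxo⟩ := hxS
    obtain ⟨y, rfl⟩ := Sym2.mem_iff_exists.mp hxe
    have hadjxy : T.Adj x y := hadj x y he
    have hyo : d y % 2 = 0 := by
      have := hendp x y he
      omega
    have hyD : y ∈ Sᶜ := by
      simp only [Set.mem_compl_iff, hSdef, Set.mem_setOf_eq, not_and]
      intro _
      omega
    refine ⟨y, hyD, hadjxy.symm, ?_⟩
    ext w
    simp only [Set.mem_inter_iff, mem_neighborSet, Set.mem_singleton_iff]
    constructor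
    · rintro ⟨hyw, hwS⟩
      obtain ⟨⟨e', he', hwe'⟩, hwo⟩ := hwS
      have hm : s(y,w) ∈ M := by
        by_contra hnm
        have := (hpar y w hyw).mpr hnm
        omega
      have heq : s(y,w) = s(x,y) :=
        huniq y _ _ hm he (Sym2.mem_mk_left y w) (Sym2.mem_mk_right x y)
      rcases Sym2.eq_iff.mp heq with ⟨h1, h2⟩ | ⟨h1, h2⟩
      · exact absurd (h1 ▸ hadjxy) (T.irrefl)
      · exact h2
    · intro hwx
      rw [hwx]
      exact ⟨hadjxy.symm, ⟨s(x,y), he, Sym2.mem_mk_left x y⟩, hxo⟩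
  refine ⟨Sᶜ, ⟨?_, ?_⟩, by omega⟩
  · intro x hx
    obtain ⟨y, hy, hadj', -⟩ := hdom x hx
    exact ⟨y, hy, hadj'⟩
  · intro x hx
    obtain ⟨y, hy, -, hset⟩ := hdom x hx
    refine ⟨y, hy, ?_⟩
    rwa [compl_compl]

/-- For a finite tree `T`, `γ_sp(T) = n(T) - α'(T)`. -/
theorem superDominationNumber_tree {V : Type*} [Fintype V]
    (T : SimpleGraph V) (hT : T.IsTree) :
    superDominationNumber T = Nat.card V - matchingNumber T := by
  classical
  apply le_antisymm
  · obtain ⟨D, hD, hcard⟩ := superDominating_upper T hT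
    exact Nat.sInf_le ⟨D, hD, hcard⟩
  · apply le_csInf
    · exact ⟨(Set.univ : Set V).ncard, Set.univ,
        ⟨fun x hx => absurd (Set.mem_univ x) hx, fun x hx => absurd (Set.mem_univ x) hx⟩, rfl⟩
    · rintro m ⟨D, hD, rfl⟩
      exact superDominating_lower T hD
end

section
/- Let T be a finite tree and let M be a matching in T. Then the set V(M) of vertices covered by M can be partitioned into two sets A and B such that the set E_T[A,B] of edges of T with one endpoint in A and the other in B is exactly M. -/
open SimpleGraph

/-- For any matching `M` in a finite tree `T`, the set `V(M)` of covered
vertices can be partitioned into sets `A` and `B` with `E_T[A,B] = M`. -/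
theorem matching_partition_tree {V : Type*} [Fintype V]
    (T : SimpleGraph V) (hT : T.IsTree)
    (M : Set (Sym2 V)) (hM : IsMatchingSet T M) :
    ∃ A B : Set V, Disjoint A B ∧ A ∪ B = matchingCovered M ∧ edgesBetween T A B = M := by
  classical
  have hconn := hT.isConnected
  have hne : Nonempty V := hconn.nonempty
  obtain ⟨r⟩ := hne
  let P : ∀ v, T.Path r v := fun v => ((hconn.preconnected r v).some).toPath
  let f : V → ZMod 2 := fun v =>
    (((P v : T.Walk r v).edges.countP (fun e => decide (e ∈ M)) : ℕ) : ZMod 2)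
  have hz : ∀ a b : ZMod 2, a + (a + b) = b := by decide
  have key : ∀ x y, T.Adj x y → f x + f y = if s(x, y) ∈ M then 1 else 0 := by
    intro x y e
    by_cases hy : y ∈ (P x : T.Walk r x).support
    · have htake : ((P x : T.Walk r x).takeUntil y hy).IsPath := (P x).2.takeUntil hy
      have hdrop : ((P x : T.Walk r x).dropUntil y hy).IsPath := (P x).2.dropUntil hy
      have hdropEq : (⟨_, hdrop⟩ : T.Path y x) = Path.singleton e.symm :=
        hT.IsAcyclic.path_unique _ _
      have hPy : P y = ⟨_, htake⟩ := hT.IsAcyclic.path_unique _ _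
      have hedges : (P x : T.Walk r x).edges
          = ((P x : T.Walk r x).takeUntil y hy).edges ++ [s(y, x)] := by
        conv_lhs => rw [← (P x : T.Walk r x).take_spec hy]
        rw [Walk.edges_append]
        congr 1
        have := congrArg (fun p : T.Path y x => (p : T.Walk y x).edges) hdropEq
        simpa [Path.singleton] using this
      have hfx : f x = f y + (if s(x, y) ∈ M then 1 else 0) := by
        show (((P x : T.Walk r x).edges.countP (fun e => decide (e ∈ M)) : ℕ) : ZMod 2) = _
        rw [hedges, List.countP_append]
        have hy' : ((P y : T.Walk r y).edges.countP (fun e => decide (e ∈ M)))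
            = (((P x : T.Walk r x).takeUntil y hy).edges.countP (fun e => decide (e ∈ M))) := by
          rw [hPy]
        push_cast
        rw [show f y = (((P y : T.Walk r y).edges.countP (fun e => decide (e ∈ M)) : ℕ) : ZMod 2) from rfl, hy']
        congr 1
        have hsw : s(y, x) = s(x, y) := Sym2.eq_swap
        by_cases hm : s(x, y) ∈ M
        · simp [List.countP_cons, hsw, hm]
        · simp [List.countP_cons, hsw, hm]
      rw [hfx]
      have h2 : ∀ a b : ZMod 2, (a + b) + a = b := by decide
      exact h2 _ _
    · have hpath : ((P x : T.Walk r x).concat e).IsPath := by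
        rw [← Walk.isPath_reverse_iff, Walk.reverse_concat, Walk.cons_isPath_iff]
        refine ⟨(P x).2.reverse, by simpa using hy⟩
      have hPy : P y = ⟨_, hpath⟩ := hT.IsAcyclic.path_unique _ _
      have hfy : f y = f x + (if s(x, y) ∈ M then 1 else 0) := by
        show (((P y : T.Walk r y).edges.countP (fun e => decide (e ∈ M)) : ℕ) : ZMod 2) = _
        rw [hPy]
        show ((((P x : T.Walk r x).concat e).edges.countP (fun e => decide (e ∈ M)) : ℕ) : ZMod 2) = _
        rw [Walk.edges_concat, List.concat_eq_append, List.countP_append]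
        push_cast
        congr 1
        by_cases hm : s(x, y) ∈ M
        · simp [List.countP_cons, hm]
        · simp [List.countP_cons, hm]
      rw [hfy, hz]
  refine ⟨{v | v ∈ matchingCovered M ∧ f v = 0}, {v | v ∈ matchingCovered M ∧ f v = 1}, ?_, ?_, ?_⟩
  · rw [Set.disjoint_left]
    rintro v ⟨-, h0⟩ ⟨-, h1⟩
    rw [h0] at h1
    exact absurd h1 (by decide)
  · ext v
    simp only [Set.mem_union, Set.mem_setOf_eq]
    constructor
    · rintro (⟨h, -⟩ | ⟨h, -⟩) <;> exact h
    · intro h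
      have : f v = 0 ∨ f v = 1 := by
        have : ∀ z : ZMod 2, z = 0 ∨ z = 1 := by decide
        exact this _
      rcases this with h' | h'
      · exact Or.inl ⟨h, h'⟩
      · exact Or.inr ⟨h, h'⟩
  · ext e
    constructor
    · rintro ⟨he, a, ⟨-, ha⟩, b, ⟨-, hb⟩, rfl⟩
      have hab : T.Adj a b := he
      have := key a b hab
      rw [ha, hb] at this
      by_contra hmem
      rw [if_neg hmem] at this
      exact absurd this.symm (by decide)
    · intro he
      induction e with
      | h u v =>
        have heE : s(u, v) ∈ T.edgeSet := hM.1 he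
        have hadj : T.Adj u v := heE
        have hu : u ∈ matchingCovered M := ⟨s(u, v), he, by simp⟩
        have hv : v ∈ matchingCovered M := ⟨s(u, v), he, by simp⟩
        have hk := key u v hadj
        rw [if_pos he] at hk
        have : ∀ z : ZMod 2, z = 0 ∨ z = 1 := by decide
        rcases this (f u) with h' | h'
        · refine ⟨heE, u, ⟨hu, h'⟩, v, ⟨hv, ?_⟩, rfl⟩
          rw [h'] at hk; simpa using hk
        · refine ⟨heE, v, ⟨hv, ?_⟩, u, ⟨hu, h'⟩, Sym2.eq_swap⟩
          rw [h'] at hk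
          have : ∀ z : ZMod 2, 1 + z = 1 → z = 0 := by decide
          exact this _ hk
end

section
/- Let G be a finite connected simple graph and let k be a positive integer with k ≡ 3 (mod 4). Then γ_sp(S_k(G)) = ((k+1)/2)·m(G) + 1 if G is a tree, and γ_sp(S_k(G)) = ((k+1)/2)·m(G) otherwise, where m(G) is the number of edges of G. -/
open SimpleGraph

/-- The `k`-subdivision `S_k(G)` of `G` (with the convention `S_0(G) = G`): every edge of
`G` is replaced by a disjoint path through `k` new internal vertices of degree `2`. -/
noncomputable def subdivision {V : Type*} (G : SimpleGraph V) (k : ℕ) :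
    SimpleGraph (V ⊕ (G.edgeSet × Fin k)) :=
  SimpleGraph.fromRel fun x y =>
    match x, y with
    | Sum.inl u, Sum.inl v => k = 0 ∧ G.Adj u v
    | Sum.inl u, Sum.inr ⟨e, i⟩ =>
        ((i : ℕ) = 0 ∧ u = (Quot.out e.val).1) ∨ ((i : ℕ) = k - 1 ∧ u = (Quot.out e.val).2)
    | Sum.inr ⟨e, i⟩, Sum.inr ⟨f, j⟩ => e = f ∧ (i : ℕ) + 1 = (j : ℕ)
    | _, _ => False

namespace SubdivProof
open Finset
variable {V : Type*} {G : SimpleGraph V} {k : ℕ}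

noncomputable def ep1 (e : G.edgeSet) : V := (Quot.out e.val).1
noncomputable def ep2 (e : G.edgeSet) : V := (Quot.out e.val).2

lemma ep_mk (e : G.edgeSet) : s(ep1 e, ep2 e) = e.val := Quot.out_eq e.val

lemma ep_adj (e : G.edgeSet) : G.Adj (ep1 e) (ep2 e) := by
  rw [← SimpleGraph.mem_edgeSet, ep_mk]; exact e.2

lemma ep_ne (e : G.edgeSet) : ep1 e ≠ ep2 e := (ep_adj e).ne

lemma mem_edge_iff (e : G.edgeSet) (u : V) : u ∈ e.val ↔ u = ep1 e ∨ u = ep2 e := by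
  rw [← ep_mk e, Sym2.mem_iff]

lemma adj_inl_inl (hk : k ≠ 0) (u v : V) :
    ¬ (subdivision G k).Adj (Sum.inl u) (Sum.inl v) := by
  simp [subdivision, hk]

lemma adj_inl_inr (u : V) (e : G.edgeSet) (i : Fin k) :
    (subdivision G k).Adj (Sum.inl u) (Sum.inr (e, i)) ↔
      ((i : ℕ) = 0 ∧ u = ep1 e) ∨ ((i : ℕ) = k - 1 ∧ u = ep2 e) := by
  simp [subdivision, ep1, ep2]

lemma adj_inr_inl (u : V) (e : G.edgeSet) (i : Fin k) :
    (subdivision G k).Adj (Sum.inr (e, i)) (Sum.inl u) ↔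
      ((i : ℕ) = 0 ∧ u = ep1 e) ∨ ((i : ℕ) = k - 1 ∧ u = ep2 e) := by
  rw [adj_comm]; exact adj_inl_inr u e i

lemma adj_inr_inr (e f : G.edgeSet) (i j : Fin k) :
    (subdivision G k).Adj (Sum.inr (e, i)) (Sum.inr (f, j)) ↔
      e = f ∧ ((i : ℕ) + 1 = (j : ℕ) ∨ (j : ℕ) + 1 = (i : ℕ)) := by
  simp only [subdivision, fromRel_adj]
  constructor
  · rintro ⟨hne, (⟨rfl, h⟩ | ⟨rfl, h⟩)⟩ <;> exact ⟨rfl, by omega⟩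
  · rintro ⟨rfl, (h | h)⟩
    · exact ⟨by simp [Prod.ext_iff, Fin.ext_iff]; omega, Or.inl ⟨rfl, h⟩⟩
    · exact ⟨by simp [Prod.ext_iff, Fin.ext_iff]; omega, Or.inr ⟨rfl, h⟩⟩

lemma lower_bound {V : Type*} [Fintype V] [Nonempty V] (G : SimpleGraph V) (k : ℕ)
    (hk3 : k % 4 = 3) (D : Set (V ⊕ (G.edgeSet × Fin k)))
    (hD : IsSuperDominating (subdivision G k) D) :
    (k+1)/2 * G.edgeSet.ncard + (Fintype.card V - G.edgeSet.ncard) ≤ D.ncard := by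
  classical
  have hk0 : k ≠ 0 := by omega
  obtain ⟨-, hsup⟩ := hD
  -- the selection function
  choose f0 hf0D hf0N using hsup
  set f : (V ⊕ (G.edgeSet × Fin k)) → (V ⊕ (G.edgeSet × Fin k)) :=
    fun x => if h : x ∈ D then x else f0 x h with hfdef
  have hfD : ∀ x ∉ D, f x ∈ D := by
    intro x hx; simp only [hfdef, dif_neg hx]; exact hf0D x hx
  have hfN : ∀ x ∉ D, (subdivision G k).neighborSet (f x) ∩ Dᶜ = {x} := by
    intro x hx; simp only [hfdef, dif_neg hx]; exact hf0N x hx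
  have hadj : ∀ x ∉ D, (subdivision G k).Adj (f x) x := by
    intro x hx
    have : x ∈ (subdivision G k).neighborSet (f x) ∩ Dᶜ := by rw [hfN x hx]; rfl
    exact this.1
  have hfinj : ∀ x ∉ D, ∀ y ∉ D, f x = f y → x = y := by
    intro x hx y hy hxy
    have h1 : y ∈ (subdivision G k).neighborSet (f x) ∩ Dᶜ := by
      rw [hxy, hfN y hy]; rfl
    rw [hfN x hx] at h1; exact h1.symm
  -- common element of two pairs forces equality
  have comm : ∀ x ∉ D, ∀ y ∉ D, ∀ z, (z = x ∨ z = f x) → (z = y ∨ z = f y) → x = y := by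
    intro x hx y hy z hz1 hz2
    rcases hz1 with rfl | rfl
    · rcases hz2 with rfl | h
      · rfl
      · exact absurd (h ▸ hfD y hy) hx
    · rcases hz2 with h | h
      · exact absurd (h ▸ hfD x hx) hy
      · exact hfinj x hx y hy h

  -- f x is inr when x is inl and x ∉ D
  have hinl : ∀ (u : V), Sum.inl u ∉ D → ∃ e i, f (Sum.inl u) = Sum.inr (e, i) := by
    intro u hu
    rcases hfx : f (Sum.inl u) with v | p
    · exact absurd (hfx ▸ hadj _ hu) (adj_inl_inl hk0 v u)
    · rcases p with ⟨e, i⟩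
      exact ⟨e, i, rfl⟩
  set η : (V ⊕ (G.edgeSet × Fin k)) → Option G.edgeSet := fun x =>
    match x with
    | .inr p => some p.1
    | .inl _ => match f x with | .inr p => some p.1 | .inl _ => none
    with hηdef
  have hηinr : ∀ (p : G.edgeSet × Fin k), η (Sum.inr p) = some p.1 := fun p => rfl
  have hηfoot : ∀ x ∉ D, ∀ (e : G.edgeSet) (i : Fin k),
      (x = Sum.inr (e,i) ∨ f x = Sum.inr (e,i)) → η x = some e := by
    intro x hx e i h
    rcases h with rfl | hfx
    · rfl
    · rcases x with u | p
      · simp only [hηdef, hfx]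
      · have := (adj_inr_inr e p.1 i p.2).mp (by rw [← hfx]; exact hadj _ hx)
        rw [hηinr, this.1]
  have hηsome : ∀ x ∉ D, ∃ e, η x = some e := by
    intro x hx
    rcases x with u | p
    · obtain ⟨e, i, he⟩ := hinl u hx
      exact ⟨e, hηfoot _ hx e i (Or.inr he)⟩
    · exact ⟨p.1, rfl⟩
  set g : (V ⊕ (G.edgeSet × Fin k)) → V := fun x =>
    match x with
    | .inl u => u
    | .inr _ => match f x with | .inl u => u | .inr _ => Classical.arbitrary V
    with hgdef
  set endP : (V ⊕ (G.edgeSet × Fin k)) → Prop := fun x =>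
    (∃ u, x = Sum.inl u) ∨ (∃ u, f x = Sum.inl u) with hendPdef
  have hgpair : ∀ x ∉ D, endP x → (Sum.inl (g x) = x ∨ Sum.inl (g x) = f x) := by
    intro x hx hend
    rcases x with u | p
    · exact Or.inl rfl
    · rcases hend with ⟨u, hu⟩ | ⟨u, hu⟩
      · exact absurd hu (by simp)
      · right; simp only [hgdef, hu]
  have hgl : ∀ u : V, g (Sum.inl u) = u := fun _ => rfl
  have hendl : ∀ x, endP x ↔ ((∃ u, x = Sum.inl u) ∨ (∃ u, f x = Sum.inl u)) :=
    fun x => Iff.rfl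
  clear_value f η g endP
  set C : Finset (V ⊕ (G.edgeSet × Fin k)) := Set.toFinset Dᶜ with hCdef
  have hCmem : ∀ x, x ∈ C ↔ x ∉ D := by intro x; simp [hCdef]
  -- per-edge data
  set F : G.edgeSet → Finset (V ⊕ (G.edgeSet × Fin k)) :=
    fun e => C.filter (fun x => η x = some e) with hFdef
  have hcard1 : C.card = ∑ e : G.edgeSet, (F e).card := by
    rw [Finset.card_eq_sum_card_fiberwise (f := η) (t := Finset.univ) (fun x _ => mem_univ _),
      Fintype.sum_option]
    have h0 : (C.filter (fun x => η x = none)).card = 0 := by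
      rw [Finset.card_eq_zero, Finset.filter_eq_empty_iff]
      intro x hx
      obtain ⟨e, he⟩ := hηsome x ((hCmem x).mp hx)
      simp [he]
    rw [h0, zero_add]
  have hmemF : ∀ (e : G.edgeSet), ∀ x ∈ F e, x ∉ D ∧ η x = some e := by
    intro e x hx
    rw [hFdef, Finset.mem_filter] at hx
    exact ⟨(hCmem x).mp hx.1, hx.2⟩
  -- the per-edge bound
  have key : ∀ e : G.edgeSet, (F e).card ≤ (k-1)/2 +
      (if ((F e).filter endP).Nonempty then 1 else 0) := by
    intro e
    have hmemF := hmemF e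
    set B := (F e).filter endP with hBdef
    -- B.card ≤ 2
    have hB2 : B.card ≤ 2 := by
      have hginto : ∀ x ∈ B, g x = ep1 e ∨ g x = ep2 e := by
        intro x hxB
        rw [hBdef, Finset.mem_filter] at hxB
        obtain ⟨hxD, hηx⟩ := hmemF x hxB.1
        rcases hgpair x hxD hxB.2 with hgx | hgx
        · -- x = inl (g x), partner f x = inr (e, i)
          obtain ⟨e', i, hfi⟩ := hinl (g x) (by rw [hgx]; exact hxD)
          rw [← hgx] at hηx hxD
          have he' : η (Sum.inl (g x)) = some e' :=
            hηfoot _ hxD e' i (Or.inr hfi)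
          have hee : e' = e := by
            rw [hηx] at he'; exact (Option.some_inj.mp he').symm
          subst hee
          have hadj' : (subdivision G k).Adj (Sum.inr (e', i)) (Sum.inl (g x)) := by
            rw [← hfi]; exact hadj _ hxD
          rcases (adj_inr_inl _ _ _).mp hadj' with ⟨-, h⟩ | ⟨-, h⟩
          · exact Or.inl h
          · exact Or.inr h
        · -- f x = inl (g x)
          rcases hxr : x with u | p <;> subst hxr
          · rw [hgl u] at hgx
            have hfd := hfD _ hxD
            rw [← hgx] at hfd
            exact absurd hfd hxD
          · rw [hηinr] at hηx
            have hpe : p.1 = e := Option.some_inj.mp hηx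
            have hadj' : (subdivision G k).Adj (Sum.inl (g (Sum.inr p))) (Sum.inr (e, p.2)) := by
              rw [hgx, ← hpe]
              exact hadj _ hxD
            rcases (adj_inl_inr _ _ _).mp hadj' with ⟨-, h⟩ | ⟨-, h⟩
            · exact Or.inl h
            · exact Or.inr h
      have hle : B.card ≤ ({ep1 e, ep2 e} : Finset V).card := by
        apply Finset.card_le_card_of_injOn g
        · intro x hxB
          rcases hginto x hxB with h | h <;> simp [h]
        · intro x hxB y hyB hgxy
          have hxB' := Finset.mem_coe.mp hxB
          have hyB' := Finset.mem_coe.mp hyB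
          rw [hBdef, Finset.mem_filter] at hxB' hyB'
          obtain ⟨hxD, -⟩ := hmemF x hxB'.1
          obtain ⟨hyD, -⟩ := hmemF y hyB'.1
          refine comm x hxD y hyD (Sum.inl (g x)) ?_ ?_
          · rcases hgpair x hxD hxB'.2 with h | h
            · exact Or.inl h
            · exact Or.inr h
          · rw [hgxy]
            rcases hgpair y hyD hyB'.2 with h | h
            · exact Or.inl h
            · exact Or.inr h
      calc B.card ≤ ({ep1 e, ep2 e} : Finset V).card := hle
        _ ≤ 2 := by
          apply le_trans (Finset.card_insert_le _ _); simp
    -- footprint counting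
    set U := (Finset.univ : Finset (Fin k)).filter
      (fun i => ∃ x ∈ F e, (x = Sum.inr (e,i) ∨ f x = Sum.inr (e,i))) with hUdef
    set ζ : Fin k → (V ⊕ (G.edgeSet × Fin k)) := fun i =>
      if h : ∃ x ∈ F e, (x = Sum.inr (e,i) ∨ f x = Sum.inr (e,i)) then h.choose
      else Sum.inr (e,i) with hζdef
    have hζeq : ∀ (i : Fin k), ∀ x ∈ F e,
        (x = Sum.inr (e,i) ∨ f x = Sum.inr (e,i)) → ζ i = x := by
      intro i x hxF hfoot
      have hex : ∃ x ∈ F e, (x = Sum.inr (e,i) ∨ f x = Sum.inr (e,i)) := ⟨x, hxF, hfoot⟩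
      rw [hζdef]
      simp only [dif_pos hex]
      obtain ⟨hyF, hyfoot⟩ := hex.choose_spec
      refine comm _ (hmemF _ hyF).1 _ (hmemF _ hxF).1 (Sum.inr (e,i)) ?_ ?_
      · rcases hyfoot with h | h
        exacts [Or.inl h.symm, Or.inr h.symm]
      · rcases hfoot with h | h
        exacts [Or.inl h.symm, Or.inr h.symm]
    have hζmem : ∀ i ∈ U, ζ i ∈ F e := by
      intro i hi
      rw [hUdef, Finset.mem_filter] at hi
      obtain ⟨x, hxF, hfoot⟩ := hi.2
      rw [hζeq i x hxF hfoot]; exact hxF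
    have hUcard : U.card = ∑ x ∈ F e, ((U.filter (fun i => ζ i = x)).card) :=
      Finset.card_eq_sum_card_fiberwise hζmem
    have hwt : ∀ x ∈ F e, (if endP x then 1 else 2) ≤ (U.filter (fun i => ζ i = x)).card := by
      intro x hxF
      obtain ⟨hxD, hηx⟩ := hmemF x hxF
      obtain u | p := x
      · -- x = inl u : end pair with foot f x = inr (e, j)
        obtain ⟨e', j, hfj⟩ := hinl u hxD
        have hee : e' = e := by
          have h2 := hηfoot _ hxD e' j (Or.inr hfj)
          rw [hηx] at h2; exact (Option.some_inj.mp h2).symm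
        subst hee
        have hend : endP (Sum.inl u) := (hendl _).mpr (Or.inl ⟨u, rfl⟩)
        rw [if_pos hend]
        have hjU : j ∈ U := by
          rw [hUdef, Finset.mem_filter]
          exact ⟨Finset.mem_univ _, ⟨Sum.inl u, hxF, Or.inr hfj⟩⟩
        exact Finset.card_pos.mpr ⟨j, Finset.mem_filter.mpr ⟨hjU, hζeq j _ hxF (Or.inr hfj)⟩⟩
      · -- x = inr p
        have hpe : p.1 = e := Option.some_inj.mp ((hηinr p).symm.trans hηx)
        have hfoot1 : Sum.inr p = (Sum.inr (e, p.2) : V ⊕ (G.edgeSet × Fin k)) := by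
          rw [← hpe]
        rcases hfr : f (Sum.inr p) with u | q
        · -- end pair, foot p.2
          have hend : endP (Sum.inr p) := (hendl _).mpr (Or.inr ⟨u, hfr⟩)
          rw [if_pos hend]
          have hpU : p.2 ∈ U := by
            rw [hUdef, Finset.mem_filter]
            exact ⟨Finset.mem_univ _, ⟨Sum.inr p, hxF, Or.inl hfoot1⟩⟩
          exact Finset.card_pos.mpr
            ⟨p.2, Finset.mem_filter.mpr ⟨hpU, hζeq p.2 _ hxF (Or.inl hfoot1)⟩⟩
        · -- both internal
          have hadjq : (subdivision G k).Adj (Sum.inr q) (Sum.inr p) := by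
            rw [← hfr]; exact hadj _ hxD
          have hq := (adj_inr_inr q.1 p.1 q.2 p.2).mp hadjq
          have hend : ¬ endP (Sum.inr p) := by
            intro hcon
            rcases (hendl _).mp hcon with ⟨u, hu⟩ | ⟨u, hu⟩
            · cases hu
            · rw [hfr] at hu; cases hu
          rw [if_neg hend]
          have hfoot2 : f (Sum.inr p) = (Sum.inr (e, q.2) : V ⊕ (G.edgeSet × Fin k)) := by
            rw [hfr, ← hpe, ← hq.1]
          have hne : p.2 ≠ q.2 := by
            intro h
            rcases hq.2 with h2 | h2 <;> rw [h] at h2 <;> omega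
          have hsub : ({p.2, q.2} : Finset (Fin k)) ⊆
              U.filter (fun i => ζ i = Sum.inr p) := by
            intro i hi
            rcases Finset.mem_insert.mp hi with rfl | hi'
            · refine Finset.mem_filter.mpr ⟨?_, hζeq _ _ hxF (Or.inl hfoot1)⟩
              rw [hUdef, Finset.mem_filter]
              exact ⟨Finset.mem_univ _, ⟨Sum.inr p, hxF, Or.inl hfoot1⟩⟩
            · rcases Finset.mem_singleton.mp hi' with rfl
              refine Finset.mem_filter.mpr ⟨?_, hζeq _ _ hxF (Or.inr hfoot2)⟩
              rw [hUdef, Finset.mem_filter]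
              exact ⟨Finset.mem_univ _, ⟨Sum.inr p, hxF, Or.inr hfoot2⟩⟩
          calc (2:ℕ) = ({p.2, q.2} : Finset (Fin k)).card := (Finset.card_pair hne).symm
            _ ≤ _ := Finset.card_le_card hsub
    -- arithmetic for this edge
    have hsum : ∑ x ∈ F e, (if endP x then 1 else 2) ≤ k := by
      calc ∑ x ∈ F e, (if endP x then 1 else 2)
          ≤ ∑ x ∈ F e, (U.filter (fun i => ζ i = x)).card := Finset.sum_le_sum hwt
        _ = U.card := hUcard.symm
        _ ≤ (Finset.univ : Finset (Fin k)).card := by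
            rw [hUdef]; exact Finset.card_filter_le _ _
        _ = k := by simp
    have hsplit : ∑ x ∈ F e, (if endP x then 1 else 2)
        = B.card + 2 * ((F e).filter (fun x => ¬ endP x)).card := by
      rw [Finset.sum_ite, Finset.sum_const, Finset.sum_const, hBdef]
      simp [mul_comm]
    have hcardsplit : B.card + ((F e).filter (fun x => ¬ endP x)).card = (F e).card := by
      rw [hBdef]; exact Finset.card_filter_add_card_filter_not _
    by_cases hne : ((F e).filter endP).Nonempty
    · have hb1 : 1 ≤ B.card := Finset.card_pos.mpr (hBdef ▸ hne)
      rw [if_pos hne]; omega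
    · have hb0 : B.card = 0 := by
        rw [Finset.card_eq_zero, hBdef, Finset.not_nonempty_iff_eq_empty.mp hne]
      rw [if_neg hne]; omega
  -- now sum over the edges
  set T := (Finset.univ : Finset G.edgeSet).filter
    (fun e => ((F e).filter endP).Nonempty) with hTdef
  have hCbound : C.card ≤ (Fintype.card G.edgeSet) * ((k-1)/2) + T.card := by
    rw [hcard1]
    calc ∑ e, (F e).card
        ≤ ∑ e : G.edgeSet, ((k-1)/2 + if ((F e).filter endP).Nonempty then 1 else 0) :=
          Finset.sum_le_sum (fun e _ => key e)
      _ = (Fintype.card G.edgeSet) * ((k-1)/2) + T.card := by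
          rw [Finset.sum_add_distrib, Finset.sum_const, Finset.card_univ, smul_eq_mul,
            Finset.sum_ite, Finset.sum_const, Finset.sum_const, hTdef]
          simp
  have hTV : T.card ≤ Fintype.card V := by
    rw [← Finset.card_univ (α := V)]
    set ψ : G.edgeSet → V := fun e =>
      if h : ((F e).filter endP).Nonempty then g h.choose else Classical.arbitrary V
      with hψdef
    apply Finset.card_le_card_of_injOn ψ (fun _ _ => Finset.mem_univ _)
    intro e heT e' heT' hψee
    have heT2 := Finset.mem_coe.mp heT
    have heT2' := Finset.mem_coe.mp heT'
    rw [hTdef, Finset.mem_filter] at heT2 heT2'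
    have h1 := heT2.2
    have h2 := heT2'.2
    have hx1 := h1.choose_spec
    have hx2 := h2.choose_spec
    rw [Finset.mem_filter] at hx1 hx2
    obtain ⟨hxD1, hηx1⟩ := hmemF _ _ hx1.1
    obtain ⟨hxD2, hηx2⟩ := hmemF _ _ hx2.1
    have hψ1 : ψ e = g h1.choose := by rw [hψdef]; simp only [dif_pos h1]
    have hψ2 : ψ e' = g h2.choose := by rw [hψdef]; simp only [dif_pos h2]
    have hgg : g h1.choose = g h2.choose := by rw [← hψ1, ← hψ2, hψee]
    have hxx : h1.choose = h2.choose := by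
      refine comm _ hxD1 _ hxD2 (Sum.inl (g h1.choose)) ?_ ?_
      · rcases hgpair _ hxD1 hx1.2 with h | h
        exacts [Or.inl h, Or.inr h]
      · rw [hgg]
        rcases hgpair _ hxD2 hx2.2 with h | h
        exacts [Or.inl h, Or.inr h]
    have : some e = some e' := by rw [← hηx1, hxx, hηx2]
    exact Option.some_inj.mp this
  have hTE : T.card ≤ Fintype.card G.edgeSet := by
    calc T.card ≤ (Finset.univ : Finset G.edgeSet).card := by
          rw [hTdef]; exact Finset.card_filter_le _ _
      _ = _ := Finset.card_univ
  -- final arithmetic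
  have hDf : D.ncard = D.toFinset.card := Set.ncard_eq_toFinset_card' D
  have hDle : D.toFinset.card ≤ Fintype.card (V ⊕ (G.edgeSet × Fin k)) :=
    Finset.card_le_univ _
  have hcompl : D.toFinset.card + C.card = Fintype.card (V ⊕ (G.edgeSet × Fin k)) := by
    rw [hCdef, Set.toFinset_compl, Finset.card_compl]
    omega
  have hW : Fintype.card (V ⊕ (G.edgeSet × Fin k))
      = Fintype.card V + Fintype.card G.edgeSet * k := by
    simp [Fintype.card_sum, Fintype.card_prod, mul_comm]
  have hm : G.edgeSet.ncard = Fintype.card G.edgeSet := by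
    rw [Set.ncard_eq_toFinset_card', Set.toFinset_card]
  obtain ⟨t, rfl⟩ : ∃ t, k = 4*t+3 := ⟨k/4, by omega⟩
  rw [hm]
  have e1 : (4*t+3+1)/2 = 2*t+2 := by omega
  have e2 : (4*t+3-1)/2 = 2*t+1 := by omega
  rw [e1]
  rw [e2] at hCbound
  have e3 : Fintype.card G.edgeSet * (4*t+3)
      = Fintype.card G.edgeSet * (2*t+1) + Fintype.card G.edgeSet * (2*t+2) := by ring
  rw [e3] at hW
  have e4 : (2*t+2) * Fintype.card G.edgeSet = Fintype.card G.edgeSet * (2*t+2) := by ring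
  rw [e4]
  set A1 := Fintype.card G.edgeSet * (2*t+1) with hA1
  set A2 := Fintype.card G.edgeSet * (2*t+2) with hA2
  omega


lemma count_pattern (t a : ℕ) (ha : a ≤ 1) :
    ((Finset.range (4*t+3)).filter (fun i => i % 4 = a ∨ i % 4 = a+1)).card = 2*t+2 := by
  induction t with
  | zero =>
    interval_cases a <;> decide
  | succ n ih =>
    have h4 : 4*(n+1)+3 = (4*n+3) + 1 + 1 + 1 + 1 := by ring
    rw [h4, range_add_one, range_add_one, range_add_one, range_add_one,
      filter_insert, filter_insert, filter_insert, filter_insert]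
    have m0 : (4*n+3) % 4 = 3 := by omega
    have m1 : (4*n+3+1) % 4 = 0 := by omega
    have m2 : (4*n+3+1+1) % 4 = 1 := by omega
    have m3 : (4*n+3+1+1+1) % 4 = 2 := by omega
    interval_cases a
    · rw [if_neg (by omega), if_pos (by omega), if_pos (by omega), if_neg (by omega),
        card_insert_of_notMem (by simp <;> omega), card_insert_of_notMem (by simp <;> omega)]
      omega
    · rw [if_pos (by omega), if_pos (by omega), if_neg (by omega), if_neg (by omega),
        card_insert_of_notMem (by simp <;> omega), card_insert_of_notMem (by simp <;> omega)]
      omega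

lemma exists_parent {V : Type*} (H : SimpleGraph V) (hH : H.Connected) (r : V) :
    ∃ p : V → V, ∀ v, v ≠ r → H.Adj v (p v) ∧ H.dist (p v) r < H.dist v r := by
  classical
  have hstep : ∀ v, v ≠ r → ∃ w, H.Adj v w ∧ H.dist w r < H.dist v r := by
    intro v hv
    have hpos : 0 < H.dist v r := hH.pos_dist_of_ne hv
    obtain ⟨wlk, hlen⟩ := hH.exists_walk_length_eq_dist v r
    cases wlk with
    | nil => simp only [Walk.length_nil] at hlen; omega
    | @cons _ w _ h q =>
      refine ⟨w, h, ?_⟩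
      have h2 := SimpleGraph.dist_le q
      simp [SimpleGraph.Walk.length_cons] at hlen
      omega
  choose p hp using hstep
  refine ⟨fun v => if h : v = r then v else p v h, ?_⟩
  intro v hv
  simp only [dif_neg hv]
  exact hp v hv

lemma deleteEdge_connected {V : Type*} (G : SimpleGraph V) (hconn : G.Connected) {a b : V}
    (hre : (G \ fromEdgeSet {s(a,b)}).Reachable a b) :
    (G \ fromEdgeSet {s(a,b)}).Connected := by
  rw [connected_iff]
  refine ⟨?_, hconn.nonempty⟩
  intro u w
  have hu : ∀ x y, G.Adj x y → (G \ fromEdgeSet {s(a,b)}).Reachable x y := by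
    intro x y hxy
    by_cases hh : s(x,y) = s(a,b)
    · rcases Sym2.eq_iff.mp hh with ⟨rfl, rfl⟩ | ⟨rfl, rfl⟩
      · exact hre
      · exact hre.symm
    · refine Adj.reachable ?_
      rw [sdiff_adj]
      refine ⟨hxy, ?_⟩
      rw [fromEdgeSet_adj]
      rintro ⟨hmem, -⟩
      exact hh (Set.mem_singleton_iff.mp hmem)
  obtain ⟨wk⟩ := hconn.preconnected u w
  induction wk with
  | nil => exact Reachable.refl _
  | cons h q ih => exact (hu _ _ h).trans ih

lemma exists_anchor {V : Type*} (G : SimpleGraph V) (hconn : G.Connected) :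
    ∃ (r : V) (A : V → Sym2 V),
      (∀ v, (v ≠ r ∨ ¬ G.IsTree) → A v ∈ G.edgeSet ∧ v ∈ A v) ∧
      (∀ v w, (v ≠ r ∨ ¬ G.IsTree) → (w ≠ r ∨ ¬ G.IsTree) → A v = A w → v = w) := by
  classical
  by_cases htree : G.IsTree
  · -- tree case: any root, parent map
    have : Nonempty V := hconn.nonempty
    set r := Classical.arbitrary V with hr
    obtain ⟨p, hp⟩ := exists_parent G hconn r
    refine ⟨r, fun v => s(v, p v), ?_, ?_⟩
    · intro v hv
      rcases hv with hv | hv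
      · exact ⟨(G.mem_edgeSet).mpr (hp v hv).1, Sym2.mem_mk_left _ _⟩
      · exact absurd htree hv
    · intro v w hv hw hA
      rcases hv with hv | hv; swap; · exact absurd htree hv
      rcases hw with hw | hw; swap; · exact absurd htree hw
      rcases Sym2.eq_iff.mp hA with ⟨h1, -⟩ | ⟨h1, h2⟩
      · exact h1
      · have d1 := (hp v hv).2
        have d2 := (hp w hw).2
        rw [← h1] at d2
        rw [h2] at d1
        omega
  · -- non-tree case
    have hnac : ¬ G.IsAcyclic := by
      intro hac
      exact htree ⟨hconn, hac⟩
    obtain ⟨a, b, hadj, hnb⟩ : ∃ a b, G.Adj a b ∧ ¬ G.IsBridge s(a,b) := by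
      by_contra hcon
      push_neg at hcon
      exact hnac (isAcyclic_iff_forall_adj_isBridge.mpr (fun v w h => hcon v w h))
    have hre : (G \ fromEdgeSet {s(a,b)}).Reachable a b := by
      rw [isBridge_iff] at hnb
      push_neg at hnb
      exact hnb
    set G' := G \ fromEdgeSet {s(a,b)} with hG'
    have hG'conn : G'.Connected := deleteEdge_connected G hconn hre
    obtain ⟨p, hp⟩ := exists_parent G' hG'conn a
    have hnotab : ∀ w, w ≠ a → s(w, p w) ≠ s(a, b) := by
      intro w hw hcon
      have hadj' := (hp w hw).1
      rw [hG', sdiff_adj] at hadj'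
      exact hadj'.2 (by rw [fromEdgeSet_adj]; exact ⟨by rw [hcon]; rfl, hadj'.1.ne⟩)
    refine ⟨a, fun v => if v = a then s(a, b) else s(v, p v), ?_, ?_⟩
    · intro v _
      dsimp only
      by_cases hv : v = a
      · subst hv; rw [if_pos rfl]
        exact ⟨(G.mem_edgeSet).mpr hadj, Sym2.mem_mk_left _ _⟩
      · rw [if_neg hv]
        have hadj' := (hp v hv).1
        rw [hG', sdiff_adj] at hadj'
        exact ⟨(G.mem_edgeSet).mpr hadj'.1, Sym2.mem_mk_left _ _⟩
    · intro v w _ _ hA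
      dsimp only at hA
      by_cases hv : v = a <;> by_cases hw : w = a
      · rw [hv, hw]
      · rw [if_pos hv, if_neg hw] at hA
        exact absurd hA.symm (hnotab w hw)
      · rw [if_neg hv, if_pos hw] at hA
        exact absurd hA (hnotab v hv)
      · rw [if_neg hv, if_neg hw] at hA
        rcases Sym2.eq_iff.mp hA with ⟨h1, -⟩ | ⟨h1, h2⟩
        · exact h1
        · have d1 := (hp v hv).2
          have d2 := (hp w hw).2
          rw [← h1] at d2
          rw [h2] at d1
          omega

lemma fin_range_filter (k : ℕ) (p : ℕ → Prop) [DecidablePred p] :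
    ((Finset.univ : Finset (Fin k)).filter (fun i => p i.val)).card
      = ((Finset.range k).filter p).card := by
  apply Finset.card_bij (fun i _ => i.val)
  · intro a ha
    rw [Finset.mem_filter, Finset.mem_range]
    exact ⟨a.isLt, (Finset.mem_filter.mp ha).2⟩
  · intro a _ b _ h
    exact Fin.ext h
  · intro b hb
    rw [Finset.mem_filter, Finset.mem_range] at hb
    exact ⟨⟨b, hb.1⟩, Finset.mem_filter.mpr ⟨Finset.mem_univ _, hb.2⟩, rfl⟩

open scoped Classical in
lemma upper_bound {V : Type*} [Fintype V] (G : SimpleGraph V) (hconn : G.Connected)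
    (t k : ℕ) (hk : k = 4*t+3) :
    ∃ D : Set (V ⊕ (G.edgeSet × Fin k)), IsSuperDominating (subdivision G k) D ∧
      D.ncard = (k+1)/2 * G.edgeSet.ncard + (if G.IsTree then 1 else 0) := by
  classical
  subst hk
  set k := 4*t+3 with hkdef
  obtain ⟨r, A, hA1, hA2⟩ := exists_anchor G hconn
  set dom : V → Prop := fun v => v ≠ r ∨ ¬ G.IsTree with hdomdef
  set side : G.edgeSet → Prop := fun e => ∃ v, dom v ∧ A v = e.val ∧ v = ep2 e with hsidedef
  set pat : G.edgeSet → ℕ → Prop := fun e n =>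
    if side e then (n % 4 = 1 ∨ n % 4 = 2) else (n % 4 = 0 ∨ n % 4 = 1) with hpatdef
  have hpat_pos : ∀ (e : G.edgeSet) (n : ℕ), side e → (pat e n ↔ (n % 4 = 1 ∨ n % 4 = 2)) := by
    intro e n hs
    rw [hpatdef]
    simp only [if_pos hs]
  have hpat_neg : ∀ (e : G.edgeSet) (n : ℕ), ¬ side e →
      (pat e n ↔ (n % 4 = 0 ∨ n % 4 = 1)) := by
    intro e n hs
    rw [hpatdef]
    simp only [if_neg hs]
  set D : Set (V ⊕ (G.edgeSet × Fin k)) := fun x =>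
    match x with
    | .inl u => G.IsTree ∧ u = r
    | .inr p => pat p.1 (p.2 : ℕ) with hDdef
  have hDinl : ∀ u : V, (Sum.inl u ∈ D) ↔ (G.IsTree ∧ u = r) := fun _ => Iff.rfl
  have hDinr : ∀ (e : G.edgeSet) (i : Fin k), (Sum.inr (e,i) ∈ D) ↔ pat e (i : ℕ) :=
    fun _ _ => Iff.rfl
  have hside : ∀ (u : V) (e : G.edgeSet), dom u → A u = e.val → (side e ↔ u = ep2 e) := by
    intro u e hu hAu
    constructor
    · rintro ⟨v, hv, hAv, hv2⟩
      have : v = u := hA2 v u hv hu (by rw [hAv, hAu])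
      rw [← this]; exact hv2
    · intro h2
      exact ⟨u, hu, hAu, h2⟩
  have master : ∀ (y x : V ⊕ (G.edgeSet × Fin k)), x ∉ D → (subdivision G k).Adj y x →
      (∀ z, (subdivision G k).Adj y z → z ≠ x → z ∈ D) →
      (subdivision G k).neighborSet y ∩ Dᶜ = {x} := by
    intro y x hx hadjx hall
    ext z
    simp only [Set.mem_inter_iff, mem_neighborSet, Set.mem_compl_iff, Set.mem_singleton_iff]
    constructor
    · rintro ⟨hz1, hz2⟩
      by_contra hne
      exact hz2 (hall z hz1 hne)
    · rintro rfl
      exact ⟨hadjx, hx⟩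
  have inr_master : ∀ (e : G.edgeSet) (i : Fin k) (m : ℕ) (hm : m < k),
      Sum.inr (e,i) ∉ D → pat e m →
      (m+1 = (i:ℕ) ∨ (i:ℕ)+1 = m) →
      m ≠ 0 → m ≠ k-1 →
      (∀ j : Fin k, (m+1 = (j:ℕ) ∨ (j:ℕ)+1 = m) → (j:ℕ) ≠ (i:ℕ) → pat e (j:ℕ)) →
      ∃ yy ∈ D, (subdivision G k).neighborSet yy ∩ Dᶜ = {Sum.inr (e,i)} := by
    intro e i m hm hx hpy hadjy h0 hk1 hother
    refine ⟨Sum.inr (e, ⟨m, hm⟩), (hDinr e ⟨m, hm⟩).mpr hpy, master _ _ hx ?_ ?_⟩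
    · exact (adj_inr_inr e e ⟨m, hm⟩ i).mpr ⟨rfl, hadjy⟩
    · intro z hz hne
      rcases z with w | ⟨f, j⟩
      · rcases (adj_inr_inl w e ⟨m, hm⟩).mp hz with ⟨h,-⟩|⟨h,-⟩
        · exact absurd h h0
        · exact absurd h hk1
      · obtain ⟨hef, hj⟩ := (adj_inr_inr e f ⟨m, hm⟩ j).mp hz
        subst hef
        have hji : (j:ℕ) ≠ (i:ℕ) := by
          intro hcon
          exact hne (by rw [show j = i from Fin.ext hcon])
        exact (hDinr e j).mpr (hother j hj hji)
  -- the main super domination property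
  have hsup2 : ∀ x ∉ D, ∃ y ∈ D, (subdivision G k).neighborSet y ∩ Dᶜ = {x} := by
    intro x hx
    rcases x with u | ⟨e, i⟩
    · -- original vertex
      have hdom : dom u := by
        by_cases ht : G.IsTree
        · exact Or.inl (fun hur => hx ((hDinl u).mpr ⟨ht, hur⟩))
        · exact Or.inr ht
      have he := hA1 u hdom
      set e : G.edgeSet := ⟨A u, he.1⟩ with hedef
      have hAe : A u = e.val := rfl
      have hmem : u = ep1 e ∨ u = ep2 e := (mem_edge_iff e u).mp he.2
      rcases hmem with h1 | h2
      · -- anchored at first endpoint: side e is false, use internal vertex 0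
        have hns : ¬ side e := by
          intro hsd
          have := (hside u e hdom hAe).mp hsd
          exact ep_ne e (h1 ▸ this ▸ rfl)
        have h0k : (0:ℕ) < k := by omega
        have hp0 : pat e 0 := (hpat_neg e 0 hns).mpr (by omega)
        refine ⟨Sum.inr (e, ⟨0, h0k⟩), (hDinr e ⟨0, h0k⟩).mpr hp0, master _ _ hx ?_ ?_⟩
        · exact (adj_inr_inl u e ⟨0, h0k⟩).mpr (Or.inl ⟨rfl, h1⟩)
        · intro z hz hne
          rcases z with w | ⟨f, j⟩
          · rcases (adj_inr_inl w e ⟨0, h0k⟩).mp hz with ⟨-, hw⟩ | ⟨h0, -⟩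
            · exact absurd (by rw [hw, ← h1]) hne
            · have h0' : (0:ℕ) = k - 1 := h0
              omega
          · obtain ⟨hef, hj⟩ := (adj_inr_inr e f ⟨0, h0k⟩ j).mp hz
            subst hef
            have hj' : 0+1 = (j:ℕ) ∨ (j:ℕ)+1 = 0 := hj
            exact (hDinr e j).mpr ((hpat_neg e _ hns).mpr (by omega))
      · -- anchored at second endpoint: side e is true, use internal vertex k-1
        have hsd : side e := (hside u e hdom hAe).mpr h2
        have hkk : k-1 < k := by omega
        have hpk : pat e (k-1) := (hpat_pos e (k-1) hsd).mpr (by omega)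
        refine ⟨Sum.inr (e, ⟨k-1, hkk⟩), (hDinr e ⟨k-1, hkk⟩).mpr hpk, master _ _ hx ?_ ?_⟩
        · exact (adj_inr_inl u e ⟨k-1, hkk⟩).mpr (Or.inr ⟨rfl, h2⟩)
        · intro z hz hne
          rcases z with w | ⟨f, j⟩
          · rcases (adj_inr_inl w e ⟨k-1, hkk⟩).mp hz with ⟨h0, -⟩ | ⟨-, hw⟩
            · have h0' : k-1 = (0:ℕ) := h0
              omega
            · exact absurd (by rw [hw, ← h2]) hne
          · obtain ⟨hef, hj⟩ := (adj_inr_inr e f ⟨k-1, hkk⟩ j).mp hz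
            subst hef
            have hj' : (k-1)+1 = (j:ℕ) ∨ (j:ℕ)+1 = k-1 := hj
            have hjlt := j.isLt
            exact (hDinr e j).mpr ((hpat_pos e _ hsd).mpr (by omega))
    · -- internal vertex
      have hxp : ¬ pat e (i:ℕ) := fun h => hx ((hDinr e i).mpr h)
      have hilt := i.isLt
      by_cases hs : side e
      · have hxp' : ¬((i:ℕ) % 4 = 1 ∨ (i:ℕ) % 4 = 2) := fun h => hxp ((hpat_pos e _ hs).mpr h)
        have hi : (i:ℕ) % 4 = 0 ∨ (i:ℕ) % 4 = 3 := by omega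
        rcases hi with hi | hi
        · refine inr_master e i ((i:ℕ)+1) (by omega) hx
            ((hpat_pos e _ hs).mpr (by omega)) (by omega) (by omega) (by omega) ?_
          intro j hj hji
          have hjlt := j.isLt
          exact (hpat_pos e _ hs).mpr (by omega)
        · refine inr_master e i ((i:ℕ)-1) (by omega) hx
            ((hpat_pos e _ hs).mpr (by omega)) (by omega) (by omega) (by omega) ?_
          intro j hj hji
          have hjlt := j.isLt
          exact (hpat_pos e _ hs).mpr (by omega)
      · have hxp' : ¬((i:ℕ) % 4 = 0 ∨ (i:ℕ) % 4 = 1) := fun h => hxp ((hpat_neg e _ hs).mpr h)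
        have hi : (i:ℕ) % 4 = 2 ∨ (i:ℕ) % 4 = 3 := by omega
        rcases hi with hi | hi
        · refine inr_master e i ((i:ℕ)-1) (by omega) hx
            ((hpat_neg e _ hs).mpr (by omega)) (by omega) (by omega) (by omega) ?_
          intro j hj hji
          have hjlt := j.isLt
          exact (hpat_neg e _ hs).mpr (by omega)
        · refine inr_master e i ((i:ℕ)+1) (by omega) hx
            ((hpat_neg e _ hs).mpr (by omega)) (by omega) (by omega) (by omega) ?_
          intro j hj hji
          have hjlt := j.isLt
          exact (hpat_neg e _ hs).mpr (by omega)
  refine ⟨D, ⟨?_, hsup2⟩, ?_⟩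
  · intro x hx
    obtain ⟨y, hyD, hyN⟩ := hsup2 x hx
    refine ⟨y, hyD, ?_⟩
    have hmem : x ∈ (subdivision G k).neighborSet y ∩ Dᶜ := by rw [hyN]; rfl
    exact hmem.1
  · -- cardinality
    have hdisj : Disjoint (Sum.inl '' {u : V | G.IsTree ∧ u = r})
        (Sum.inr '' {p : G.edgeSet × Fin k | pat p.1 (p.2:ℕ)}) := by
      rw [Set.disjoint_left]
      rintro x ⟨u, -, rfl⟩ ⟨p, -, hp⟩
      cases hp
    have hDeq : D = (Sum.inl '' {u : V | G.IsTree ∧ u = r})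
        ∪ (Sum.inr '' {p : G.edgeSet × Fin k | pat p.1 (p.2:ℕ)}) := by
      ext x
      rcases x with u | p
      · simp only [Set.mem_union, Set.mem_image, Set.mem_setOf_eq]
        constructor
        · intro hu
          exact Or.inl ⟨u, (hDinl u).mp hu, rfl⟩
        · rintro (⟨v, hv, hvu⟩ | ⟨q, -, hq⟩)
          · cases hvu; exact (hDinl u).mpr hv
          · cases hq
      · simp only [Set.mem_union, Set.mem_image, Set.mem_setOf_eq]
        constructor
        · intro hp
          exact Or.inr ⟨p, (hDinr p.1 p.2).mp hp, rfl⟩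
        · rintro (⟨v, -, hv⟩ | ⟨q, hq, hqp⟩)
          · cases hv
          · cases hqp; exact (hDinr p.1 p.2).mpr hq
    rw [hDeq, Set.ncard_union_eq hdisj (Set.toFinite _) (Set.toFinite _),
      Set.ncard_image_of_injective _ Sum.inl_injective,
      Set.ncard_image_of_injective _ Sum.inr_injective]
    have h1 : ({u : V | G.IsTree ∧ u = r}).ncard = if G.IsTree then 1 else 0 := by
      by_cases ht : G.IsTree
      · rw [if_pos ht]
        have hss : {u : V | G.IsTree ∧ u = r} = {r} := by ext u; simp [ht]
        rw [hss, Set.ncard_singleton]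
      · rw [if_neg ht]
        have hss : {u : V | G.IsTree ∧ u = r} = ∅ := by ext u; simp [ht]
        rw [hss, Set.ncard_empty]
    have h2 : ({p : G.edgeSet × Fin k | pat p.1 (p.2:ℕ)}).ncard
        = (k+1)/2 * G.edgeSet.ncard := by
      rw [Set.ncard_eq_toFinset_card', Set.toFinset_setOf]
      rw [Finset.card_eq_sum_card_fiberwise
        (f := fun p : G.edgeSet × Fin k => p.1) (t := Finset.univ)
        (fun x _ => Finset.mem_univ _)]
      have hper : ∀ e : G.edgeSet,
          ((Finset.univ.filter (fun p : G.edgeSet × Fin k => pat p.1 (p.2:ℕ))).filter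
            (fun p => p.1 = e)).card = 2*t+2 := by
        intro e
        have hbij : ((Finset.univ.filter (fun p : G.edgeSet × Fin k => pat p.1 (p.2:ℕ))).filter
            (fun p => p.1 = e)).card
            = ((Finset.univ : Finset (Fin k)).filter (fun i : Fin k => pat e (i:ℕ))).card := by
          apply Finset.card_bij (fun p _ => p.2)
          · intro p hp
            simp only [Finset.mem_filter, Finset.mem_univ, true_and] at hp ⊢
            rw [← hp.2]; exact hp.1
          · intro p hp q hq hpq
            simp only [Finset.mem_filter, Finset.mem_univ, true_and] at hp hq
            exact Prod.ext (hp.2.trans hq.2.symm) hpq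
          · intro i hi
            simp only [Finset.mem_filter, Finset.mem_univ, true_and] at hi ⊢
            exact ⟨(e, i), ⟨hi, rfl⟩, rfl⟩
        rw [hbij, fin_range_filter k (fun n => pat e n)]
        by_cases hs : side e
        · have hcong : (Finset.range k).filter (fun n => pat e n)
              = (Finset.range k).filter (fun n => n % 4 = 1 ∨ n % 4 = 1+1) := by
            apply Finset.filter_congr
            intro n _
            simp only [hpat_pos e n hs]
          rw [hcong, hkdef]
          exact count_pattern t 1 (by norm_num)
        · have hcong : (Finset.range k).filter (fun n => pat e n)
              = (Finset.range k).filter (fun n => n % 4 = 0 ∨ n % 4 = 0+1) := by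
            apply Finset.filter_congr
            intro n _
            simp only [hpat_neg e n hs]
          rw [hcong, hkdef]
          exact count_pattern t 0 (by norm_num)
      rw [Finset.sum_congr rfl (fun e _ => hper e), Finset.sum_const, Finset.card_univ,
        smul_eq_mul]
      have hm : G.edgeSet.ncard = Fintype.card G.edgeSet := by
        rw [Set.ncard_eq_toFinset_card', Set.toFinset_card]
      rw [hm, hkdef]
      have : (4*t+3+1)/2 = 2*t+2 := by omega
      rw [this, Nat.mul_comm]
    rw [h1, h2, Nat.add_comm]

end SubdivProof

/-- For a finite connected graph `G` and `k ≡ 3 (mod 4)`: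
`γ_sp(S_k(G)) = ((k+1)/2)·m(G) + 1` if `G` is a tree, and
`γ_sp(S_k(G)) = ((k+1)/2)·m(G)` otherwise. -/
theorem superDominationNumber_subdivision_three_mod_four {V : Type*} [Fintype V]
    (G : SimpleGraph V) (hconn : G.Connected) (k : ℕ) (hk : k % 4 = 3) :
    (G.IsTree →
      superDominationNumber (subdivision G k) = (k + 1) / 2 * G.edgeSet.ncard + 1) ∧
    (¬ G.IsTree →
      superDominationNumber (subdivision G k) = (k + 1) / 2 * G.edgeSet.ncard) := by
  classical
  haveI hNV : Nonempty V := hconn.nonempty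
  obtain ⟨t, hkt⟩ : ∃ t, k = 4*t+3 := ⟨k/4, by omega⟩
  obtain ⟨Dc, hDc, hDcard⟩ := SubdivProof.upper_bound G hconn t k hkt
  set m := G.edgeSet.ncard with hmdef
  set X := (k+1)/2 * m with hX
  set S := {n | ∃ D : Set (V ⊕ (G.edgeSet × Fin k)),
    IsSuperDominating (subdivision G k) D ∧ D.ncard = n} with hS
  have hmem : (X + (if G.IsTree then 1 else 0)) ∈ S := ⟨Dc, hDc, hDcard⟩
  have hub : sInf S ≤ X + (if G.IsTree then 1 else 0) := Nat.sInf_le hmem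
  have hlb : X + (Fintype.card V - m) ≤ sInf S := by
    apply le_csInf ⟨_, hmem⟩
    rintro n ⟨D, hD, rfl⟩
    exact SubdivProof.lower_bound G k hk D hD
  have hsdn : superDominationNumber (subdivision G k) = sInf S := rfl
  constructor
  · intro ht
    have hmn : m + 1 = Fintype.card V := by
      have h3 := ht.card_edgeFinset
      have h4 : m = G.edgeFinset.card := by
        rw [hmdef, ← SimpleGraph.coe_edgeFinset, Set.ncard_coe_finset]
      omega
    rw [hsdn]
    rw [if_pos ht] at hub
    omega
  · intro ht
    rw [hsdn]
    rw [if_neg ht] at hub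
    omega
end

section
/- For every finite simple graph G and every positive integer k with k ≡ 3 (mod 4), γ_sp(S_k(G)) = n(S_k(G)) − α'(S_k(G)), where n denotes number of vertices and α' the matching number. -/
open SimpleGraph

open Sum Finset

section CountingHelpers
-- counting helpers
lemma cardfil (p : ℕ → Prop) [DecidablePred p] (n : ℕ) :
    ((range (n+1)).filter p).card = ((range n).filter p).card + (if p n then 1 else 0) := by
  rw [Finset.range_add_one, Finset.filter_insert]
  split_ifs with h
  · rw [Finset.card_insert_of_notMem (by simp)]
  · simp

lemma L1 (t : ℕ) : ((range (4*t+3)).filter (fun i => i % 4 = 0 ∨ i % 4 = 3)).card = 2*t+1 := by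
  induction t with
  | zero => decide
  | succ t ih =>
    have e : 4*(t+1)+3 = (4*t+3)+1+1+1+1 := by ring
    rw [e, cardfil, cardfil, cardfil, cardfil, ih]
    have h1 : (4*t+3) % 4 = 3 := by omega
    have h2 : (4*t+3+1) % 4 = 0 := by omega
    have h3 : (4*t+3+1+1) % 4 = 1 := by omega
    have h4 : (4*t+3+1+1+1) % 4 = 2 := by omega
    simp [h1, h2, h3, h4]
    ring

lemma L2 (t : ℕ) : ((range (4*t+3)).filter (fun i => i % 4 = 2 ∨ i % 4 = 3)).card = 2*t+1 := by
  induction t with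
  | zero => decide
  | succ t ih =>
    have e : 4*(t+1)+3 = (4*t+3)+1+1+1+1 := by ring
    rw [e, cardfil, cardfil, cardfil, cardfil, ih]
    have h1 : (4*t+3) % 4 = 3 := by omega
    have h2 : (4*t+3+1) % 4 = 0 := by omega
    have h3 : (4*t+3+1+1) % 4 = 1 := by omega
    have h4 : (4*t+3+1+1+1) % 4 = 2 := by omega
    simp [h1, h2, h3, h4]
    ring

-- Fin k filter to range filter
lemma finfil (k : ℕ) (p : ℕ → Prop) [DecidablePred p] :
    (Finset.filter (fun i : Fin k => p i.val) Finset.univ).card = ((range k).filter p).card := by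
  apply Finset.card_bij (fun (i : Fin k) (_ : i ∈ Finset.filter (fun i : Fin k => p i.val) Finset.univ) => (i : ℕ))
  · intro a ha
    simp only [mem_filter, mem_range] at *
    exact ⟨a.isLt, ha.2⟩
  · intro a _ b _ h
    exact Fin.ext h
  · intro b hb
    simp only [mem_filter, mem_range] at hb
    refine ⟨⟨b, hb.1⟩, ?_, rfl⟩
    simp [hb.2]

-- mirror
lemma finfil_mirror (k : ℕ) (hk : 0 < k) (p : ℕ → Prop) [DecidablePred p] :
    ((range k).filter (fun i => p (k - 1 - i))).card = ((range k).filter p).card := by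
  apply Finset.card_bij (fun (i : ℕ) (_ : i ∈ (range k).filter (fun i => p (k - 1 - i))) => k - 1 - i)
  · intro a ha
    simp only [mem_filter, mem_range] at *
    exact ⟨by omega, ha.2⟩
  · intro a ha b hb h
    simp only [mem_filter, mem_range] at *
    omega
  · intro b hb
    simp only [mem_filter, mem_range] at hb
    refine ⟨k - 1 - b, ?_, by omega⟩
    simp only [mem_filter, mem_range]
    have h : k - 1 - (k - 1 - b) = b := by omega
    rw [h]
    exact ⟨by omega, hb.2⟩

noncomputable def everts {A : Type*} [DecidableEq A] (ε : Sym2 A) : Finset A :=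
  {(Quot.out ε).1, (Quot.out ε).2}

lemma mem_everts {A : Type*} [DecidableEq A] (ε : Sym2 A) (x : A) : x ∈ everts ε ↔ x ∈ ε := by
  have h : Sym2.mk (Quot.out ε).1 (Quot.out ε).2 = ε := Quot.out_eq _
  conv_rhs => rw [← h]
  rw [everts]
  constructor
  · intro hx
    rcases Finset.mem_insert.mp hx with rfl | hx
    · exact Sym2.mem_mk_left _ _
    · rw [Finset.mem_singleton] at hx
      subst hx
      exact Sym2.mem_mk_right _ _
  · intro hx
    rcases Sym2.mem_iff.mp hx with rfl | rfl
    · exact Finset.mem_insert_self _ _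
    · exact Finset.mem_insert_of_mem (Finset.mem_singleton_self _)

lemma card_everts {A : Type*} [DecidableEq A] {ε : Sym2 A} (h : ¬ ε.IsDiag) : (everts ε).card = 2 := by
  have hne : (Quot.out ε).1 ≠ (Quot.out ε).2 := by
    intro he
    apply h
    have h2 : Sym2.mk (Quot.out ε).1 (Quot.out ε).2 = ε := Quot.out_eq _
    rw [← h2, Sym2.mk_isDiag_iff]
    exact he
  rw [everts, Finset.card_insert_of_notMem (by simpa using hne), Finset.card_singleton]

open Classical in
noncomputable def pathOf {V : Type*} (G : SimpleGraph V) (k : ℕ) [Nonempty G.edgeSet]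
    (ε : Sym2 (V ⊕ (G.edgeSet × Fin k))) : G.edgeSet :=
  if h : ∃ p : G.edgeSet × Fin k, inr p ∈ ε then h.choose.1 else Classical.arbitrary _

lemma pathOf_mixed {V : Type*} (G : SimpleGraph V) (k : ℕ) [Nonempty G.edgeSet]
    (u : V) (g : G.edgeSet) (i : Fin k) :
    pathOf G k s(inl u, inr (g, i)) = g := by
  have h : ∃ p : G.edgeSet × Fin k, inr p ∈ s(inl u, inr (g, i)) :=
    ⟨(g, i), Sym2.mem_mk_right _ _⟩
  rw [pathOf, dif_pos h]
  have hs := h.choose_spec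
  rw [Sym2.mem_iff] at hs
  rcases hs with hs | hs
  · exact absurd hs (by simp)
  · have : h.choose = (g, i) := by exact_mod_cast inr_injective hs
    rw [this]

lemma pathOf_inr2 {V : Type*} (G : SimpleGraph V) (k : ℕ) [Nonempty G.edgeSet]
    (g : G.edgeSet) (i i' : Fin k) :
    pathOf G k s(inr (g, i), inr (g, i')) = g := by
  have h : ∃ p : G.edgeSet × Fin k, inr p ∈ (s(inr (g, i), inr (g, i')) : Sym2 (V ⊕ (G.edgeSet × Fin k))) :=
    ⟨(g, i), Sym2.mem_mk_left _ _⟩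
  rw [pathOf, dif_pos h]
  have hs := h.choose_spec
  rw [Sym2.mem_iff] at hs
  rcases hs with hs | hs
  · have : h.choose = (g, i) := inr_injective hs
    rw [this]
  · have : h.choose = (g, i') := inr_injective hs
    rw [this]

end CountingHelpers

namespace SDsub

variable {V : Type*} (G : SimpleGraph V) {k : ℕ}

noncomputable def ue (e : G.edgeSet) : V := (Quot.out (e : Sym2 V)).1
noncomputable def ve (e : G.edgeSet) : V := (Quot.out (e : Sym2 V)).2

lemma adj_uv (e : G.edgeSet) : G.Adj (ue G e) (ve G e) := by
  have h : Sym2.mk (Quot.out (e : Sym2 V)).1 (Quot.out (e : Sym2 V)).2 = (e : Sym2 V) := Quot.out_eq _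
  have := e.2
  rw [← h] at this
  exact this

lemma ue_ne_ve (e : G.edgeSet) : ue G e ≠ ve G e := (adj_uv G e).ne

lemma adj_inl_inl (hk : k ≠ 0) (u v : V) : ¬ (subdivision G k).Adj (inl u) (inl v) := by
  rw [subdivision, fromRel_adj]
  rintro ⟨-, h | h⟩ <;> exact hk h.1

lemma adj_inl_inr (u : V) (e : G.edgeSet) (i : Fin k) :
    (subdivision G k).Adj (inl u) (inr (e, i)) ↔
      ((i : ℕ) = 0 ∧ u = ue G e) ∨ ((i : ℕ) = k - 1 ∧ u = ve G e) := by
  rw [subdivision, fromRel_adj]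
  simp [ue, ve]

lemma adj_inr_inr (e f : G.edgeSet) (i j : Fin k) :
    (subdivision G k).Adj (inr (e, i)) (inr (f, j)) ↔
      e = f ∧ ((i : ℕ) + 1 = j ∨ (j : ℕ) + 1 = i) := by
  rw [subdivision, fromRel_adj]
  constructor
  · rintro ⟨hne, ⟨h1, h2⟩ | ⟨h1, h2⟩⟩
    · exact ⟨h1, Or.inl h2⟩
    · exact ⟨h1.symm, Or.inr h2⟩
  · rintro ⟨rfl, h | h⟩
    · exact ⟨by simp [Fin.ext_iff]; omega, Or.inl ⟨rfl, h⟩⟩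
    · exact ⟨by simp [Fin.ext_iff]; omega, Or.inr ⟨rfl, h⟩⟩

/-- the pattern of "outside" internal vertices on a path, depending on the case of the edge -/
def pat (k : ℕ) : Option Bool → ℕ → Prop
  | none, i => i % 4 = 0 ∨ i % 4 = 3
  | some false, i => i % 4 = 2 ∨ i % 4 = 3
  | some true, i => (k - 1 - i) % 4 = 2 ∨ (k - 1 - i) % 4 = 3

noncomputable def ep (e : G.edgeSet) : Bool → V
  | false => ue G e
  | true => ve G e

/-- The complement of the super dominating set we construct, given case data `c`. -/
def Uset (c : G.edgeSet → Option Bool) : Set (V ⊕ (G.edgeSet × Fin k)) :=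
  {x | match x with
    | inl w => ∃ e b, c e = some b ∧ w = ep G e b
    | inr (e, i) => pat k (c e) (i : ℕ)}

lemma inl_mem_Uset (c : G.edgeSet → Option Bool) (w : V) :
    inl w ∈ (Uset G c : Set (V ⊕ (G.edgeSet × Fin k))) ↔ ∃ e b, c e = some b ∧ w = ep G e b :=
  Iff.rfl

lemma inr_mem_Uset (c : G.edgeSet → Option Bool) (e : G.edgeSet) (i : Fin k) :
    inr (e, i) ∈ (Uset G c : Set (V ⊕ (G.edgeSet × Fin k))) ↔ pat k (c e) (i : ℕ) :=
  Iff.rfl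

/-- A guard in the interior of a path works. -/
lemma internal_spec (c : G.edgeSet → Option Bool) (e : G.edgeSet) (i j : Fin k)
    (hk3 : 3 ≤ k)
    (hj1 : 1 ≤ (j : ℕ)) (hj2 : (j : ℕ) ≤ k - 2)
    (hij : (i : ℕ) + 1 = j ∨ (j : ℕ) + 1 = i)
    (hyU : ¬ pat k (c e) (j : ℕ)) (hxU : pat k (c e) (i : ℕ))
    (hother : ∀ i' : Fin k, ((i' : ℕ) + 1 = j ∨ (j : ℕ) + 1 = i') →
        pat k (c e) (i' : ℕ) → i' = i) :
    inr (e, j) ∈ (Uset G c : Set (V ⊕ (G.edgeSet × Fin k)))ᶜ ∧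
      (subdivision G k).neighborSet (inr (e, j)) ∩ Uset G c = {inr (e, i)} := by
  constructor
  · exact hyU
  · apply Set.eq_singleton_iff_unique_mem.mpr
    refine ⟨⟨?_, hxU⟩, ?_⟩
    · show (subdivision G k).Adj _ _
      rw [adj_inr_inr]
      exact ⟨rfl, hij.symm⟩
    · rintro z ⟨hzN, hzU⟩
      rw [SimpleGraph.mem_neighborSet] at hzN
      rcases z with w | ⟨f, i'⟩
      · exfalso
        have := ((subdivision G k).adj_symm hzN)
        rw [adj_inl_inr] at this
        omega
      · rw [adj_inr_inr] at hzN
        obtain ⟨rfl, h2⟩ := hzN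
        have : i' = i := hother i' (by omega) hzU
        rw [this]

/-- Guard for an endpoint vertex assigned via `c e = some b`. -/
lemma endpoint_spec (c : G.edgeSet → Option Bool) (e : G.edgeSet) (b : Bool)
    (hk3 : 3 ≤ k) (hce : c e = some b) :
    ∃ y, y ∈ (Uset G c : Set (V ⊕ (G.edgeSet × Fin k)))ᶜ ∧
      (subdivision G k).neighborSet y ∩ Uset G c = {inl (ep G e b)} := by
  have hk0 : 0 < k := by omega
  cases b
  · refine ⟨inr (e, ⟨0, hk0⟩), ?_, ?_⟩
    · show ¬ pat k (c e) _
      rw [hce]; simp only [pat]; omega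
    · apply Set.eq_singleton_iff_unique_mem.mpr
      constructor
      · constructor
        · show (subdivision G k).Adj _ _
          exact ((adj_inl_inr G (ep G e false) e ⟨0, hk0⟩).mpr (Or.inl ⟨rfl, rfl⟩)).symm
        · exact ⟨e, false, hce, rfl⟩
      · rintro z ⟨hzN, hzU⟩
        rw [SimpleGraph.mem_neighborSet] at hzN
        rcases z with w | ⟨f, i'⟩
        · have := ((subdivision G k).adj_symm hzN)
          rw [adj_inl_inr] at this
          rcases this with ⟨h1, h2⟩ | ⟨h1, h2⟩
          · subst h2; rfl
          · exfalso; simp at h1; omega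
        · exfalso
          rw [adj_inr_inr] at hzN
          obtain ⟨rfl, h2⟩ := hzN
          have hzU' : pat k (c e) (i' : ℕ) := hzU
          rw [hce] at hzU'; simp only [pat] at hzU'
          simp at h2
          omega
  · refine ⟨inr (e, ⟨k - 1, by omega⟩), ?_, ?_⟩
    · show ¬ pat k (c e) _
      rw [hce]; simp only [pat]; omega
    · apply Set.eq_singleton_iff_unique_mem.mpr
      constructor
      · constructor
        · show (subdivision G k).Adj _ _
          exact ((adj_inl_inr G (ep G e true) e ⟨k - 1, by omega⟩).mpr (Or.inr ⟨rfl, rfl⟩)).symm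
        · exact ⟨e, true, hce, rfl⟩
      · rintro z ⟨hzN, hzU⟩
        rw [SimpleGraph.mem_neighborSet] at hzN
        rcases z with w | ⟨f, i'⟩
        · have := ((subdivision G k).adj_symm hzN)
          rw [adj_inl_inr] at this
          rcases this with ⟨h1, h2⟩ | ⟨h1, h2⟩
          · exfalso; simp at h1; omega
          · subst h2; rfl
        · exfalso
          rw [adj_inr_inr] at hzN
          obtain ⟨rfl, h2⟩ := hzN
          have hzU' : pat k (c e) (i' : ℕ) := hzU
          rw [hce] at hzU'; simp only [pat] at hzU'
          simp at h2
          have := i'.isLt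
          omega

lemma guard_spec (hk : k % 4 = 3) (c : G.edgeSet → Option Bool) :
    ∀ x ∈ (Uset G c : Set (V ⊕ (G.edgeSet × Fin k))), ∃ y,
      y ∈ (Uset G c)ᶜ ∧ (subdivision G k).neighborSet y ∩ Uset G c = {x} := by
  have hk3 : 3 ≤ k := by omega
  rintro (w | ⟨e, i⟩) hx
  · obtain ⟨e, b, hce, rfl⟩ := hx
    exact endpoint_spec G c e b hk3 hce
  · have hx' : pat k (c e) (i : ℕ) := hx
    have hik : (i : ℕ) < k := i.isLt
    rcases hce : c e with _ | b
    all_goals rw [hce] at hx'; try simp only [pat] at hx'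
    · -- case B : pattern i % 4 = 0 or 3
      rcases hx' with h0 | h3
      · refine ⟨inr (e, ⟨(i : ℕ) + 1, by omega⟩), internal_spec G c e i _ hk3 (by simp)
          (by simp; omega) (by simp) ?_ hx ?_⟩
        · show ¬ pat k (c e) _; rw [hce]; simp only [pat]; simp; omega
        · intro i' hi' hp'
          have hp'' : pat k (c e) (i' : ℕ) := hp'
          rw [hce] at hp''; simp only [pat] at hp''
          simp at hi'
          exact Fin.ext (by omega)
      · refine ⟨inr (e, ⟨(i : ℕ) - 1, by omega⟩), internal_spec G c e i _ hk3 (by simp; omega)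
          (by simp; omega) (by simp; omega) ?_ hx ?_⟩
        · show ¬ pat k (c e) _; rw [hce]; simp only [pat]; simp; omega
        · intro i' hi' hp'
          have hp'' : pat k (c e) (i' : ℕ) := hp'
          rw [hce] at hp''; simp only [pat] at hp''
          simp at hi'
          exact Fin.ext (by omega)
    · cases b
      · -- case A (assigned first endpoint): pattern i % 4 = 2 or 3
        rcases hx' with h2 | h3
        · refine ⟨inr (e, ⟨(i : ℕ) - 1, by omega⟩), internal_spec G c e i _ hk3 (by simp; omega)
            (by simp; omega) (by simp; omega) ?_ hx ?_⟩
          · show ¬ pat k (c e) _; rw [hce]; simp only [pat]; simp; omega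
          · intro i' hi' hp'
            have hp'' : pat k (c e) (i' : ℕ) := hp'
            rw [hce] at hp''; simp only [pat] at hp''
            simp at hi'
            exact Fin.ext (by omega)
        · refine ⟨inr (e, ⟨(i : ℕ) + 1, by omega⟩), internal_spec G c e i _ hk3 (by simp)
            (by simp; omega) (by simp) ?_ hx ?_⟩
          · show ¬ pat k (c e) _; rw [hce]; simp only [pat]; simp; omega
          · intro i' hi' hp'
            have hp'' : pat k (c e) (i' : ℕ) := hp'
            rw [hce] at hp''; simp only [pat] at hp''
            simp at hi'
            exact Fin.ext (by omega)
      · -- case A' (assigned second endpoint): pattern (k-1-i) % 4 = 2 or 3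
        rcases hx' with h2 | h3
        · refine ⟨inr (e, ⟨(i : ℕ) + 1, by omega⟩), internal_spec G c e i _ hk3 (by simp)
            (by simp; omega) (by simp) ?_ hx ?_⟩
          · show ¬ pat k (c e) _; rw [hce]; simp only [pat]; simp; omega
          · intro i' hi' hp'
            have hp'' : pat k (c e) (i' : ℕ) := hp'
            rw [hce] at hp''; simp only [pat] at hp''
            simp at hi'
            exact Fin.ext (by omega)
        · refine ⟨inr (e, ⟨(i : ℕ) - 1, by omega⟩), internal_spec G c e i _ hk3 (by simp; omega)
            (by simp; omega) (by simp; omega) ?_ hx ?_⟩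
          · show ¬ pat k (c e) _; rw [hce]; simp only [pat]; simp; omega
          · intro i' hi' hp'
            have hp'' : pat k (c e) (i' : ℕ) := hp'
            rw [hce] at hp''; simp only [pat] at hp''
            simp at hi'
            exact Fin.ext (by omega)

lemma isSuperDominating_Uset (hk : k % 4 = 3) (c : G.edgeSet → Option Bool) :
    IsSuperDominating (subdivision G k) ((Uset G c : Set (V ⊕ (G.edgeSet × Fin k)))ᶜ) := by
  constructor
  · intro x hx
    obtain ⟨y, hy, hN⟩ := guard_spec G hk c x (by simpa using hx)
    refine ⟨y, hy, ?_⟩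
    have : x ∈ (subdivision G k).neighborSet y ∩ Uset G c := by rw [hN]; rfl
    exact this.1
  · intro x hx
    obtain ⟨y, hy, hN⟩ := guard_spec G hk c x (by simpa using hx)
    refine ⟨y, hy, ?_⟩
    rw [compl_compl]
    exact hN


section Lower
variable {W : Type*} [Finite W] (H : SimpleGraph W)

lemma matching_bddAbove :
    BddAbove {n | ∃ M : Set (Sym2 W), IsMatchingSet H M ∧ M.ncard = n} := by
  refine ⟨Nat.card (Sym2 W), ?_⟩
  rintro n ⟨M, hM, rfl⟩
  calc M.ncard ≤ (Set.univ : Set (Sym2 W)).ncard :=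
        Set.ncard_le_ncard (Set.subset_univ M) Set.finite_univ
    _ = Nat.card (Sym2 W) := Set.ncard_univ _

lemma superdom_nonempty :
    {n | ∃ D : Set W, IsSuperDominating H D ∧ D.ncard = n}.Nonempty := by
  refine ⟨_, Set.univ, ⟨?_, ?_⟩, rfl⟩ <;>
    exact fun x hx => absurd (Set.mem_univ x) hx

lemma lower_bound : Nat.card W - matchingNumber H ≤ superDominationNumber H := by
  obtain ⟨D, hD, hcard⟩ := Nat.sInf_mem (superdom_nonempty H)
  have hsk : ∀ x : W, ∃ y : W, x ∉ D → (y ∈ D ∧ H.neighborSet y ∩ Dᶜ = {x}) := by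
    intro x
    by_cases h : x ∈ D
    · exact ⟨x, fun hx => absurd h hx⟩
    · obtain ⟨y, hy1, hy2⟩ := hD.2 x h
      exact ⟨y, fun _ => ⟨hy1, hy2⟩⟩
  choose g hg using hsk
  have key : ∀ u ∈ Dᶜ, g u ∈ D ∧ H.Adj (g u) u ∧ ∀ z, H.Adj (g u) z → z ∉ D → z = u := by
    intro u hu
    obtain ⟨h1, h2⟩ := hg u hu
    have hu' : u ∈ H.neighborSet (g u) ∩ Dᶜ := by rw [h2]; rfl
    refine ⟨h1, hu'.1, fun z hz1 hz2 => ?_⟩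
    have : z ∈ H.neighborSet (g u) ∩ Dᶜ := ⟨hz1, hz2⟩
    rw [h2] at this
    exact this
  set M : Set (Sym2 W) := (fun u => s(u, g u)) '' Dᶜ with hMdef
  have hgg : ∀ u ∈ Dᶜ, ∀ v ∈ Dᶜ, g u = g v → u = v := by
    intro u hu v hv huv
    have := (key u hu).2.2 v (huv ▸ (key v hv).2.1) hv
    exact this.symm
  have hMmat : IsMatchingSet H M := by
    constructor
    · rintro _ ⟨u, hu, rfl⟩
      exact ((key u hu).2.1).symm
    · rintro _ ⟨u, hu, rfl⟩ _ ⟨v, hv, rfl⟩ hne z hz1 hz2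
      rw [Sym2.mem_iff] at hz1 hz2
      apply hne
      rcases hz1 with rfl | rfl <;> rcases hz2 with h | h
      · rw [h]
      · exact absurd ((key v hv).1) (h ▸ hu)
      · exact absurd ((key u hu).1) (h.symm ▸ hv)
      · rw [hgg u hu v hv h]
  have hMcard : M.ncard = Dᶜ.ncard := by
    apply Set.ncard_image_of_injOn
    intro u hu v hv huv
    rw [Sym2.eq_iff] at huv
    rcases huv with ⟨h1, -⟩ | ⟨h1, h2⟩
    · exact h1
    · exact absurd ((key v hv).1) (h1 ▸ hu)
  have hle : Dᶜ.ncard ≤ matchingNumber H :=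
    le_csSup (matching_bddAbove H) ⟨M, hMmat, hMcard⟩
  have hsum := Set.ncard_add_ncard_compl D
  unfold superDominationNumber
  omega

end Lower


instance patDec (k : ℕ) : ∀ (o : Option Bool) (i : ℕ), Decidable (pat k o i)
  | none, _ => inferInstanceAs (Decidable (_ ∨ _))
  | some false, _ => inferInstanceAs (Decidable (_ ∨ _))
  | some true, _ => inferInstanceAs (Decidable (_ ∨ _))

lemma patcount {k : ℕ} (hk : k % 4 = 3) (o : Option Bool) :
    (Finset.filter (fun i : Fin k => pat k o i.val) Finset.univ).card = (k - 1) / 2 := by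
  obtain ⟨t, rfl⟩ : ∃ t, k = 4 * t + 3 := ⟨k / 4, by omega⟩
  have h2 : (4 * t + 3 - 1) / 2 = 2 * t + 1 := by omega
  rw [h2]
  rcases o with _ | b
  · rw [finfil]
    exact L1 t
  · cases b
    · rw [finfil]
      exact L2 t
    · rw [finfil]
      have := finfil_mirror (4 * t + 3) (by omega) (fun j => j % 4 = 2 ∨ j % 4 = 3)
      calc ((range (4*t+3)).filter (fun i => pat (4*t+3) (some true) i)).card
          = ((range (4*t+3)).filter (fun i => (4*t+3-1-i) % 4 = 2 ∨ (4*t+3-1-i) % 4 = 3)).card := rfl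
        _ = 2 * t + 1 := by rw [this]; exact L2 t

lemma edge_cases [Nonempty (G.edgeSet)] (hk0 : k ≠ 0) (ε : Sym2 (V ⊕ (G.edgeSet × Fin k)))
    (hε : ε ∈ (subdivision G k).edgeSet) :
    (∃ (w : V) (f : G.edgeSet) (i : Fin k), pathOf G k ε = f ∧ ε = s(inl w, inr (f, i)) ∧
      (w = ue G f ∨ w = ve G f)) ∨
    (∃ (f : G.edgeSet) (i i' : Fin k), pathOf G k ε = f ∧ ε = s(inr (f, i), inr (f, i'))) := by
  induction ε using Sym2.ind with
  | _ a b =>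
    rw [SimpleGraph.mem_edgeSet] at hε
    rcases a with w | ⟨g, i⟩ <;> rcases b with w' | ⟨g', i'⟩
    · exact absurd hε (adj_inl_inl G hk0 w w')
    · refine Or.inl ⟨w, g', i', pathOf_mixed G k w g' i', rfl, ?_⟩
      rw [adj_inl_inr] at hε
      rcases hε with ⟨-, h⟩ | ⟨-, h⟩
      · exact Or.inl h
      · exact Or.inr h
    · have hsw : (s(inr (g, i), inl w') : Sym2 (V ⊕ (G.edgeSet × Fin k))) = s(inl w', inr (g, i)) :=
        Sym2.eq_swap
    
      rw [hsw]
      refine Or.inl ⟨w', g, i, pathOf_mixed G k w' g i, rfl, ?_⟩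
      have hε' := hε.symm
      rw [adj_inl_inr] at hε'
      rcases hε' with ⟨-, h⟩ | ⟨-, h⟩
      · exact Or.inl h
      · exact Or.inr h
    · rw [adj_inr_inr] at hε
      obtain ⟨rfl, -⟩ := hε
      exact Or.inr ⟨g, i, i', pathOf_inr2 G k g i i', rfl⟩

lemma upper_bound [Fintype V] (hk : k % 4 = 3) :
    superDominationNumber (subdivision G k) ≤
      Nat.card (V ⊕ (G.edgeSet × Fin k)) - matchingNumber (subdivision G k) := by
  classical
  have hk3 : 3 ≤ k := by omega
  have hk0 : k ≠ 0 := by omega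
  have hne0 : {n | ∃ M : Set (Sym2 (V ⊕ (G.edgeSet × Fin k))),
      IsMatchingSet (subdivision G k) M ∧ M.ncard = n}.Nonempty :=
    ⟨0, ∅, ⟨Set.empty_subset _, fun e he => absurd he (Set.notMem_empty e)⟩, Set.ncard_empty _⟩
  obtain ⟨M, hM, hMcard⟩ := Nat.sSup_mem hne0 (matching_bddAbove (subdivision G k))
  suffices hS : ∃ D : Set (V ⊕ (G.edgeSet × Fin k)), IsSuperDominating (subdivision G k) D ∧
      D.ncard + M.ncard ≤ Nat.card (V ⊕ (G.edgeSet × Fin k)) by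
    obtain ⟨D, hD, hle⟩ := hS
    have h1 : superDominationNumber (subdivision G k) ≤ D.ncard := by
      unfold superDominationNumber
      exact Nat.sInf_le ⟨D, hD, rfl⟩
    have h2 : matchingNumber (subdivision G k) = M.ncard := by
      unfold matchingNumber
      exact hMcard.symm
    omega
  rcases isEmpty_or_nonempty (G.edgeSet) with hE | hE
  · -- no edges at all
    have hHE : (subdivision G k).edgeSet = ∅ := by
      ext ε
      simp only [Set.mem_empty_iff_false, iff_false]
      induction ε using Sym2.ind with
      | _ a b =>
        intro hedge
        rw [SimpleGraph.mem_edgeSet] at hedge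
        rcases a with w | p
        · rcases b with w' | p'
          · exact adj_inl_inl G hk0 w w' hedge
          · exact hE.elim p'.1
        · exact hE.elim p.1
    have hM0 : M = ∅ := Set.eq_empty_of_subset_empty (hHE ▸ hM.1)
    refine ⟨Set.univ, ⟨fun x hx => absurd (Set.mem_univ x) hx,
      fun x hx => absurd (Set.mem_univ x) hx⟩, ?_⟩
    rw [hM0, Set.ncard_empty, Set.ncard_univ]
    omega
  · -- main case
    let c : G.edgeSet → Option Bool := fun f =>
      if ∃ i : Fin k, s(inl (ue G f), inr (f, i)) ∈ M then some false
      else if ∃ i : Fin k, s(inl (ve G f), inr (f, i)) ∈ M then some true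
      else none
    have hc : ∀ f, c f =
      if ∃ i : Fin k, s(inl (ue G f), inr (f, i)) ∈ M then some false
      else if ∃ i : Fin k, s(inl (ve G f), inr (f, i)) ∈ M then some true
      else none := fun f => rfl
    have hc_some : ∀ f b, c f = some b → ∃ i : Fin k, s(inl (ep G f b), inr (f, i)) ∈ M := by
      intro f b hb
      rw [hc] at hb
      split_ifs at hb with h1 h2
      · injection hb with hb
        subst hb
        exact h1
      · injection hb with hb
        subst hb
        exact h2
    have hc_none : ∀ f, c f = none →
        (¬∃ i : Fin k, s(inl (ue G f), inr (f, i)) ∈ M) ∧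
        (¬∃ i : Fin k, s(inl (ve G f), inr (f, i)) ∈ M) := by
      intro f hb
      rw [hc] at hb
      split_ifs at hb with h1 h2
      · exact ⟨h1, h2⟩
    refine ⟨(Uset G c)ᶜ, isSuperDominating_Uset G hk c, ?_⟩
    haveI hWfin : Finite (V ⊕ (G.edgeSet × Fin k)) := inferInstance
    have hfin1 : (Uset G c : Set (V ⊕ (G.edgeSet × Fin k))).Finite := Set.toFinite _
    have hfin2 : ((Uset G c : Set (V ⊕ (G.edgeSet × Fin k)))ᶜ).Finite := Set.toFinite _
    have hcompl := Set.ncard_add_ncard_compl (Uset G c) hfin1 hfin2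
    suffices hMU : M.ncard ≤ (Uset (k := k) G c).ncard by omega
    -- Finset setup
    set S : Finset (G.edgeSet) := Finset.univ.filter (fun f => c f ≠ none) with hSdef
    -- injectivity of assigned endpoints
    have hinj : ∀ f b f' b', c f = some b → c f' = some b' → ep G f b = ep G f' b' → f = f' := by
      intro f b f' b' hb hb' hep
      obtain ⟨i, hi⟩ := hc_some f b hb
      obtain ⟨i', hi'⟩ := hc_some f' b' hb'
      by_cases heq : (s(inl (ep G f b), inr (f, i)) : Sym2 (V ⊕ (G.edgeSet × Fin k))) =
          s(inl (ep G f' b'), inr (f', i'))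
      · rw [Sym2.eq_iff] at heq
        rcases heq with ⟨h1, h2⟩ | ⟨h1, h2⟩
        · injection h2 with h2
          exact congrArg Prod.fst h2
        · exact absurd h1 (by simp)
      · exact absurd (by rw [hep]; exact Sym2.mem_mk_left _ _)
          (hM.2 _ hi _ hi' heq (inl (ep G f b)) (Sym2.mem_mk_left _ _))
    -- the V-part of U
    set A : Set V := {w | ∃ e b, c e = some b ∧ w = ep G e b} with hAdef
    have hAcard : A.ncard = S.card := by
      classical
      set g : G.edgeSet → V := fun f => ep G f ((c f).getD false) with hgdef
      have hAim : A = ↑(S.image g) := by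
        ext w
        simp only [hAdef, Set.mem_setOf_eq, Finset.coe_image, Set.mem_image, Finset.mem_coe,
          hSdef, Finset.mem_filter, Finset.mem_univ, true_and]
        constructor
        · rintro ⟨e, b, hb, rfl⟩
          refine ⟨e, by simp [hb], ?_⟩
          rw [hgdef]
          simp only [hb, Option.getD_some]
        · rintro ⟨e, he, rfl⟩
          obtain ⟨b, hb⟩ := Option.ne_none_iff_exists'.mp he
          refine ⟨e, b, hb, ?_⟩
          rw [hgdef]
          simp only [hb, Option.getD_some]
      rw [hAim, Set.ncard_coe_finset]
      apply Finset.card_image_of_injOn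
      intro f hf f' hf' hgf
      rw [Finset.mem_coe, Finset.mem_filter] at hf hf'
      obtain ⟨b, hb⟩ := Option.ne_none_iff_exists'.mp hf.2
      obtain ⟨b', hb'⟩ := Option.ne_none_iff_exists'.mp hf'.2
      apply hinj f b f' b' hb hb'
      rw [hgdef] at hgf
      simpa only [hb, hb', Option.getD_some] using hgf
    -- the internal part of U
    set B : Set (G.edgeSet × Fin k) := {p | pat k (c p.1) p.2.val} with hBdef
    set BR : Finset (G.edgeSet × Fin k) :=
      Finset.univ.filter (fun p => pat k (c p.1) p.2.val) with hBRdef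
    have hBcard : B.ncard = BR.card := by
      rw [← Set.ncard_coe_finset BR]
      congr 1
      ext p
      simp [hBdef, hBRdef]
    have hBRcard : BR.card = (Finset.univ : Finset (G.edgeSet)).card * ((k - 1) / 2) := by
      rw [Finset.card_eq_sum_card_fiberwise
        (f := fun p : G.edgeSet × Fin k => p.1) (t := Finset.univ) (fun p _ => Finset.mem_univ _)]
      rw [Finset.sum_congr rfl (fun f _ => ?_), Finset.sum_const, smul_eq_mul]
      have : (BR.filter (fun p => p.1 = f)).card =
          (Finset.filter (fun i : Fin k => pat k (c f) i.val) Finset.univ).card := by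
        apply Finset.card_bij (fun (p : G.edgeSet × Fin k)
          (_ : p ∈ BR.filter (fun p => p.1 = f)) => p.2)
        · intro p hp
          rw [Finset.mem_filter] at hp
          obtain ⟨hp1, hp2⟩ := hp
          rw [hBRdef, Finset.mem_filter] at hp1
          rw [Finset.mem_filter]
          exact ⟨Finset.mem_univ _, hp2 ▸ hp1.2⟩
        · intro p hp q hq hpq
          rw [Finset.mem_filter] at hp hq
          exact Prod.ext (hp.2.trans hq.2.symm) hpq
        · intro i hi
          rw [Finset.mem_filter] at hi
          refine ⟨(f, i), ?_, rfl⟩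
          rw [Finset.mem_filter, hBRdef, Finset.mem_filter]
          exact ⟨⟨Finset.mem_univ _, hi.2⟩, rfl⟩
      rw [this, patcount hk]
    -- decomposition of U
    have hUcard : (Uset (k := k) G c).ncard = A.ncard + B.ncard := by
      have hUeq : (Uset G c : Set (V ⊕ (G.edgeSet × Fin k))) = (inl '' A) ∪ (inr '' B) := by
        ext x
        rcases x with w | p
        · simp only [Set.mem_union, Set.mem_image]
          constructor
          · intro hx
            exact Or.inl ⟨w, hx, rfl⟩
          · rintro (⟨w', hw', h⟩ | ⟨p', hp', h⟩)
            · injection h with h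
              exact h ▸ hw'
            · exact absurd h (by simp)
        · simp only [Set.mem_union, Set.mem_image]
          constructor
          · intro hx
            exact Or.inr ⟨p, hx, rfl⟩
          · rintro (⟨w', hw', h⟩ | ⟨p', hp', h⟩)
            · exact absurd h (by simp)
            · injection h with h
              exact h ▸ hp'
      rw [hUeq, Set.ncard_union_eq ?_ (Set.toFinite _) (Set.toFinite _),
        Set.ncard_image_of_injective _ Sum.inl_injective,
        Set.ncard_image_of_injective _ Sum.inr_injective]
      rw [Set.disjoint_left]
      rintro x ⟨w, -, rfl⟩ ⟨p, -, h⟩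
      exact Sum.inr_ne_inl h
    -- the matching side
    set MF : Finset (Sym2 (V ⊕ (G.edgeSet × Fin k))) := M.toFinite.toFinset with hMFdef
    have hMFcard : M.ncard = MF.card := Set.ncard_eq_toFinset_card _ _
    have hMFmem : ∀ ε, ε ∈ MF ↔ ε ∈ M := fun ε => Set.Finite.mem_toFinset _
    -- fiber bound
    have hfib : ∀ f : G.edgeSet, (MF.filter (fun ε => pathOf G k ε = f)).card ≤
        (k - 1) / 2 + (if f ∈ S then 1 else 0) := by
      intro f
      set F := MF.filter (fun ε => pathOf G k ε = f) with hFdef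
      have hFM : ∀ ε ∈ F, ε ∈ M := fun ε hε => (hMFmem ε).mp (Finset.mem_filter.mp hε).1
      have hFpath : ∀ ε ∈ F, pathOf G k ε = f := fun ε hε => (Finset.mem_filter.mp hε).2
      have hdisj : ∀ ε ∈ F, ∀ ε' ∈ F, ε ≠ ε' → Disjoint (everts ε) (everts ε') := by
        intro ε hε ε' hε' hne
        rw [Finset.disjoint_left]
        intro x hx hx'
        exact hM.2 ε (hFM ε hε) ε' (hFM ε' hε') hne x ((mem_everts ε x).mp hx)
          ((mem_everts ε' x).mp hx')
      have hcov : (F.biUnion everts).card = 2 * F.card := by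
        rw [Finset.card_biUnion hdisj,
          Finset.sum_congr rfl (fun ε hε => card_everts
            ((subdivision G k).not_isDiag_of_mem_edgeSet (hM.1 (hFM ε hε)))),
          Finset.sum_const, smul_eq_mul, mul_comm]
      by_cases hfS : f ∈ S
      · rw [if_pos hfS]
        have hsub : F.biUnion everts ⊆ insert (inl (ue G f)) (insert (inl (ve G f))
            ((Finset.univ : Finset (Fin k)).image (fun i => (inr (f, i) : V ⊕ (G.edgeSet × Fin k))))) := by
          intro x hx
          rw [Finset.mem_biUnion] at hx
          obtain ⟨ε, hε, hxε⟩ := hx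
          rw [mem_everts] at hxε
          rcases edge_cases G hk0 ε (hM.1 (hFM ε hε)) with
            ⟨w, f', i, hpf, hform, hw⟩ | ⟨f', i, i', hpf, hform⟩
          · have hff : f' = f := by rw [← hpf, hFpath ε hε]
            rw [hff] at hform hw
            rw [hform, Sym2.mem_iff] at hxε
            rcases hxε with rfl | rfl
            · rcases hw with rfl | rfl
              · exact Finset.mem_insert_self _ _
              · exact Finset.mem_insert_of_mem (Finset.mem_insert_self _ _)
            · exact Finset.mem_insert_of_mem (Finset.mem_insert_of_mem
                (Finset.mem_image_of_mem _ (Finset.mem_univ i)))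
          · have hff : f' = f := by rw [← hpf, hFpath ε hε]
            rw [hff] at hform
            rw [hform, Sym2.mem_iff] at hxε
            rcases hxε with rfl | rfl
            · exact Finset.mem_insert_of_mem (Finset.mem_insert_of_mem
                (Finset.mem_image_of_mem _ (Finset.mem_univ i)))
            · exact Finset.mem_insert_of_mem (Finset.mem_insert_of_mem
                (Finset.mem_image_of_mem _ (Finset.mem_univ i')))
        have hcard2 : (insert (inl (ue G f)) (insert (inl (ve G f))
            ((Finset.univ : Finset (Fin k)).image (fun i => (inr (f, i) : V ⊕ (G.edgeSet × Fin k)))))).card ≤ k + 2 := by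
          have h1 := Finset.card_insert_le (inl (ue G f) : V ⊕ (G.edgeSet × Fin k))
            (insert (inl (ve G f)) ((Finset.univ : Finset (Fin k)).image
              (fun i => (inr (f, i) : V ⊕ (G.edgeSet × Fin k)))))
          have h2 := Finset.card_insert_le (inl (ve G f) : V ⊕ (G.edgeSet × Fin k))
            ((Finset.univ : Finset (Fin k)).image
              (fun i => (inr (f, i) : V ⊕ (G.edgeSet × Fin k))))
          have h3 : ((Finset.univ : Finset (Fin k)).image
              (fun i => (inr (f, i) : V ⊕ (G.edgeSet × Fin k)))).card ≤ k := by
            refine le_trans Finset.card_image_le ?_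
            simp
          omega
        have := Finset.card_le_card hsub
        omega
      · rw [if_neg hfS]
        have hcf : c f = none := by
          rw [hSdef, Finset.mem_filter] at hfS
          push_neg at hfS
          exact hfS (Finset.mem_univ _)
        obtain ⟨hno1, hno2⟩ := hc_none f hcf
        have hsub : F.biUnion everts ⊆ (Finset.univ : Finset (Fin k)).image
            (fun i => (inr (f, i) : V ⊕ (G.edgeSet × Fin k))) := by
          intro x hx
          rw [Finset.mem_biUnion] at hx
          obtain ⟨ε, hε, hxε⟩ := hx
          rw [mem_everts] at hxε
          rcases edge_cases G hk0 ε (hM.1 (hFM ε hε)) with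
            ⟨w, f', i, hpf, hform, hw⟩ | ⟨f', i, i', hpf, hform⟩
          · exfalso
            have hff : f' = f := by rw [← hpf, hFpath ε hε]
            rw [hff] at hform hw
            have hε' : (s(inl w, inr (f, i)) : Sym2 (V ⊕ (G.edgeSet × Fin k))) ∈ M :=
              hform ▸ hFM ε hε
            rcases hw with rfl | rfl
            · exact hno1 ⟨i, hε'⟩
            · exact hno2 ⟨i, hε'⟩
          · have hff : f' = f := by rw [← hpf, hFpath ε hε]
            rw [hff] at hform
            rw [hform, Sym2.mem_iff] at hxε
            rcases hxε with rfl | rfl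
            · exact Finset.mem_image_of_mem _ (Finset.mem_univ i)
            · exact Finset.mem_image_of_mem _ (Finset.mem_univ i')
        have hcard2 : ((Finset.univ : Finset (Fin k)).image
            (fun i => (inr (f, i) : V ⊕ (G.edgeSet × Fin k)))).card ≤ k := by
          refine le_trans Finset.card_image_le ?_
          simp
        have := Finset.card_le_card hsub
        omega
    -- sum up
    have hMsum : MF.card = ∑ f ∈ (Finset.univ : Finset (G.edgeSet)),
        (MF.filter (fun ε => pathOf G k ε = f)).card :=
      Finset.card_eq_sum_card_fiberwise (fun ε _ => Finset.mem_univ _)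
    have hsumS : ∑ f ∈ (Finset.univ : Finset (G.edgeSet)), (if f ∈ S then 1 else 0) = S.card := by
      rw [Finset.sum_ite_mem, Finset.univ_inter, Finset.sum_const, smul_eq_mul, mul_one]
    calc M.ncard = MF.card := hMFcard
      _ ≤ ∑ f ∈ (Finset.univ : Finset (G.edgeSet)), ((k - 1) / 2 + (if f ∈ S then 1 else 0)) := by
          rw [hMsum]
          exact Finset.sum_le_sum (fun f _ => hfib f)
      _ = (Finset.univ : Finset (G.edgeSet)).card * ((k - 1) / 2) + S.card := by
          rw [Finset.sum_add_distrib, Finset.sum_const, smul_eq_mul, hsumS]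
      _ = B.ncard + A.ncard := by rw [hBcard, hBRcard, hAcard]
      _ = (Uset (k := k) G c).ncard := by rw [hUcard]; ring

end SDsub

/-- For every finite graph `G` and `k ≡ 3 (mod 4)`,
`γ_sp(S_k(G)) = n(S_k(G)) - α'(S_k(G))`. -/
theorem superDominationNumber_subdivision_three_mod_four_eq {V : Type*} [Fintype V]
    (G : SimpleGraph V) (k : ℕ) (hk : k % 4 = 3) :
    superDominationNumber (subdivision G k) =
      Nat.card (V ⊕ (G.edgeSet × Fin k)) - matchingNumber (subdivision G k) := by
  have h1 := SDsub.lower_bound (subdivision G k)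
  have h2 := SDsub.upper_bound G hk
  omega
end

section
/- For every finite simple graph F, let G_F be the graph with vertex set V(F) × {1,2,3,4}, in which two distinct vertices (x,i) and (y,j) are adjacent if and only if xy is an edge of F, or x = y (and i ≠ j). Then the II-matching number of G_F equals twice the independence number of F: ii(G_F) = 2·α(F). -/
open SimpleGraph

/-- `M` is an induced matching of `G`: a matching such that the subgraph induced by the
covered vertices contains no edges other than those of `M`. -/
def IsInducedMatchingSet {V : Type*} (G : SimpleGraph V) (M : Set (Sym2 V)) : Prop :=
  IsMatchingSet G M ∧
    ∀ e ∈ G.edgeSet, (∀ v : V, v ∈ e → v ∈ matchingCovered M) → e ∈ M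

/-- `M` is an II-matching of `G`: a matching that can be partitioned into two induced
matchings. -/
def IsIIMatching {V : Type*} (G : SimpleGraph V) (M : Set (Sym2 V)) : Prop :=
  IsMatchingSet G M ∧
    ∃ M₁ M₂ : Set (Sym2 V), M = M₁ ∪ M₂ ∧ Disjoint M₁ M₂ ∧
      IsInducedMatchingSet G M₁ ∧ IsInducedMatchingSet G M₂

/-- The II-matching number `ii(G)`: the maximum size of an II-matching in `G`. -/
noncomputable def iiMatchingNumber {V : Type*} (G : SimpleGraph V) : ℕ :=
  sSup {n | ∃ M : Set (Sym2 V), IsIIMatching G M ∧ M.ncard = n}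

/-- The independence number `α(F)`: the maximum size of a set of pairwise non-adjacent
vertices. -/
noncomputable def independenceNumber {W : Type*} (F : SimpleGraph W) : ℕ :=
  sSup {n | ∃ S : Set W, (∀ a ∈ S, ∀ b ∈ S, ¬ F.Adj a b) ∧ S.ncard = n}

/-- The graph `G_F` on `V(F) × {1,2,3,4}`: distinct vertices `(x,i)` and `(y,j)` are
adjacent iff `xy ∈ E(F)` or `x = y`. -/
def blowupFour {W : Type*} (F : SimpleGraph W) : SimpleGraph (W × Fin 4) :=
  SimpleGraph.fromRel fun x y => F.Adj x.1 y.1 ∨ x.1 = y.1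


section AuxLemmas

variable {W : Type*} [Fintype W] (F : SimpleGraph W)

lemma indepSet_def : independenceNumber F =
    sSup {n | ∃ S : Set W, (∀ a ∈ S, ∀ b ∈ S, ¬ F.Adj a b) ∧ S.ncard = n} := rfl

lemma indep_bddAbove :
    BddAbove {n | ∃ S : Set W, (∀ a ∈ S, ∀ b ∈ S, ¬ F.Adj a b) ∧ S.ncard = n} := by
  refine ⟨Fintype.card W, fun n hn => ?_⟩
  obtain ⟨S, -, rfl⟩ := hn
  have := Set.ncard_le_ncard (Set.subset_univ S) Set.finite_univ
  simpa [Set.ncard_univ, Nat.card_eq_fintype_card] using this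

lemma exists_max_indep :
    ∃ S : Set W, (∀ a ∈ S, ∀ b ∈ S, ¬ F.Adj a b) ∧ S.ncard = independenceNumber F := by
  have hne : ({n | ∃ S : Set W, (∀ a ∈ S, ∀ b ∈ S, ¬ F.Adj a b) ∧ S.ncard = n}).Nonempty :=
    ⟨0, ∅, by simp, by simp⟩
  exact Nat.sSup_mem hne (indep_bddAbove F)

lemma blowupFour_adj {u v : W × Fin 4} :
    (blowupFour F).Adj u v ↔ u ≠ v ∧ (F.Adj u.1 v.1 ∨ u.1 = v.1) := by
  unfold blowupFour
  rw [SimpleGraph.fromRel_adj]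
  constructor
  · rintro ⟨h, h2 | h2⟩
    · exact ⟨h, h2⟩
    · rcases h2 with h2 | h2
      · exact ⟨h, Or.inl h2.symm⟩
      · exact ⟨h, Or.inr h2.symm⟩
  · rintro ⟨h, h2⟩
    exact ⟨h, Or.inl h2⟩

lemma inducedMatching_ncard_le (N : Set (Sym2 (W × Fin 4)))
    (hN : IsInducedMatchingSet (blowupFour F) N) :
    N.ncard ≤ independenceNumber F := by
  obtain ⟨⟨hsub, hdisj⟩, hind⟩ := hN
  have key : ∀ e ∈ N, ∀ f ∈ N, e ≠ f → ∀ u ∈ e, ∀ v ∈ f,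
      (u : W × Fin 4).1 ≠ (v : W × Fin 4).1 ∧ ¬ F.Adj u.1 v.1 := by
    intro e he f hf hef u hu v hv
    by_contra hcon
    push_neg at hcon
    have huv : u ≠ v := fun h => hdisj e he f hf hef u hu (h ▸ hv)
    have hadj : (blowupFour F).Adj u v := by
      rw [blowupFour_adj]
      refine ⟨huv, ?_⟩
      by_cases h : u.1 = v.1
      · exact Or.inr h
      · exact Or.inl (hcon h)
    have hmem : s(u, v) ∈ N := by
      refine hind _ hadj ?_
      intro w hw
      rcases Sym2.mem_iff.mp hw with rfl | rfl
      · exact ⟨e, he, hu⟩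
      · exact ⟨f, hf, hv⟩
    have he' : e = s(u, v) := by
      by_contra h
      exact hdisj e he _ hmem h u hu (Sym2.mem_mk_left u v)
    have hf' : f = s(u, v) := by
      by_contra h
      exact hdisj f hf _ hmem h v hv (Sym2.mem_mk_right u v)
    exact hef (he'.trans hf'.symm)
  set g : Sym2 (W × Fin 4) → W := fun e => e.out.1.1 with hg
  have hinj : Set.InjOn g N := by
    intro e he f hf hgef
    by_contra hef
    exact (key e he f hf hef _ (Sym2.out_fst_mem e) _ (Sym2.out_fst_mem f)).1 hgef
  have hindep : ∀ a ∈ g '' N, ∀ b ∈ g '' N, ¬ F.Adj a b := by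
    rintro a ⟨e, he, rfl⟩ b ⟨f, hf, rfl⟩
    by_cases hef : e = f
    · subst hef
      exact F.irrefl
    · exact (key e he f hf hef _ (Sym2.out_fst_mem e) _ (Sym2.out_fst_mem f)).2
  have hmem : (g '' N).ncard ∈
      {n | ∃ S : Set W, (∀ a ∈ S, ∀ b ∈ S, ¬ F.Adj a b) ∧ S.ncard = n} :=
    ⟨g '' N, hindep, rfl⟩
  have hle := le_csSup (indep_bddAbove F) hmem
  rw [Set.ncard_image_of_injOn hinj] at hle
  exact hle

lemma vert_mem_aux (x : W) (i j : Fin 4) (v : W × Fin 4) (h : v ∈ s((x, i), (x, j))) :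
    v.1 = x ∧ (v.2 = i ∨ v.2 = j) := by
  rcases Sym2.mem_iff.mp h with rfl | rfl <;> simp

end AuxLemmas

/-- For every finite simple graph `F`, `ii(G_F) = 2·α(F)`. -/
theorem iiMatchingNumber_blowupFour {W : Type*} [Fintype W] (F : SimpleGraph W) :
    iiMatchingNumber (blowupFour F) = 2 * independenceNumber F := by
  classical
  obtain ⟨S, hSindep, hScard⟩ := exists_max_indep F
  set B : Set ℕ :=
    {n | ∃ M : Set (Sym2 (W × Fin 4)), IsIIMatching (blowupFour F) M ∧ M.ncard = n} with hB
  have hBdd : BddAbove B := by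
    refine ⟨(Set.univ : Set (Sym2 (W × Fin 4))).ncard, fun n hn => ?_⟩
    obtain ⟨M, -, rfl⟩ := hn
    exact Set.ncard_le_ncard (Set.subset_univ M) Set.finite_univ
  -- the constructed matching
  set M₁ : Set (Sym2 (W × Fin 4)) := (fun x => s((x, (0 : Fin 4)), (x, 1))) '' S with hM₁
  set M₂ : Set (Sym2 (W × Fin 4)) := (fun x => s((x, (2 : Fin 4)), (x, 3))) '' S with hM₂
  have hadj : ∀ (x : W) (i j : Fin 4), i ≠ j →
      (blowupFour F).Adj (x, i) (x, j) := by
    intro x i j hij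
    rw [blowupFour_adj]
    exact ⟨by simp [hij], Or.inr rfl⟩
  have hsub : M₁ ∪ M₂ ⊆ (blowupFour F).edgeSet := by
    rintro e (⟨x, hx, rfl⟩ | ⟨x, hx, rfl⟩)
    · exact hadj x 0 1 (by decide)
    · exact hadj x 2 3 (by decide)
  have hmatch : IsMatchingSet (blowupFour F) (M₁ ∪ M₂) := by
    refine ⟨hsub, ?_⟩
    rintro e (⟨x, hx, rfl⟩ | ⟨x, hx, rfl⟩) f (⟨y, hy, rfl⟩ | ⟨y, hy, rfl⟩) hef v hv hv' <;>
      obtain ⟨h1, h2⟩ := vert_mem_aux x _ _ v hv <;>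
      obtain ⟨h3, h4⟩ := vert_mem_aux y _ _ v hv' <;>
      [skip; skip; skip; skip] <;>
      first
      | (exact hef (by rw [h1 ▸ h3 ▸ rfl]))
      | (rcases h2 with h2 | h2 <;> rcases h4 with h4 | h4 <;> simp_all)
  have hmono : ∀ M' ⊆ M₁ ∪ M₂, IsMatchingSet (blowupFour F) M' := by
    intro M' hM'
    exact ⟨fun e he => hsub (hM' he), fun e he f hf hef v hv =>
      hmatch.2 e (hM' he) f (hM' hf) hef v hv⟩
  have hcov : ∀ (i j : Fin 4) (Mi : Set (Sym2 (W × Fin 4))),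
      Mi = (fun x => s((x, i), (x, j))) '' S →
      ∀ v ∈ matchingCovered Mi, v.1 ∈ S ∧ (v.2 = i ∨ v.2 = j) := by
    rintro i j Mi rfl v ⟨e, ⟨x, hx, rfl⟩, hv⟩
    obtain ⟨h1, h2⟩ := vert_mem_aux x i j v hv
    exact ⟨h1 ▸ hx, h2⟩
  have hindm : ∀ (i j : Fin 4), i ≠ j →
      ∀ (Mi : Set (Sym2 (W × Fin 4))), Mi = (fun x => s((x, i), (x, j))) '' S →
      Mi ⊆ M₁ ∪ M₂ →
      IsInducedMatchingSet (blowupFour F) Mi := by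
    intro i j hij Mi hMi hMisub
    refine ⟨hmono Mi hMisub, ?_⟩
    intro e he hecov
    induction e using Sym2.inductionOn with
    | _ u v =>
      rw [SimpleGraph.mem_edgeSet, blowupFour_adj] at he
      obtain ⟨huv, hadj'⟩ := he
      obtain ⟨hu1, hu2⟩ := hcov i j Mi hMi u (hecov u (Sym2.mem_mk_left u v))
      obtain ⟨hv1, hv2⟩ := hcov i j Mi hMi v (hecov v (Sym2.mem_mk_right u v))
      have hxy : u.1 = v.1 := by
        rcases hadj' with h | h
        · exact absurd h (hSindep _ hu1 _ hv1)
        · exact h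
      have h2 : u.2 ≠ v.2 := by
        intro h
        exact huv (Prod.ext hxy h)
      subst hMi
      rcases hu2 with hu2 | hu2 <;> rcases hv2 with hv2 | hv2
      · exact absurd (hu2.trans hv2.symm) h2
      · refine ⟨u.1, hu1, ?_⟩
        have e1 : (u.1, i) = u := Prod.ext rfl hu2.symm
        have e2 : (u.1, j) = v := Prod.ext hxy hv2.symm
        show s((u.1, i), (u.1, j)) = s(u, v)
        rw [e1, e2]
      · refine ⟨u.1, hu1, ?_⟩
        have e1 : (u.1, i) = v := Prod.ext hxy hv2.symm
        have e2 : (u.1, j) = u := Prod.ext rfl hu2.symm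
        show s((u.1, i), (u.1, j)) = s(u, v)
        rw [e1, e2, Sym2.eq_swap]
      · exact absurd (hu2.trans hv2.symm) h2
  have hdisj12 : Disjoint M₁ M₂ := by
    rw [Set.disjoint_left]
    rintro e ⟨x, hx, rfl⟩ ⟨y, hy, he⟩
    rw [Sym2.eq_iff] at he
    rcases he with ⟨h, -⟩ | ⟨h, -⟩ <;> simp [Prod.ext_iff] at h
  have hii : IsIIMatching (blowupFour F) (M₁ ∪ M₂) :=
    ⟨hmatch, M₁, M₂, rfl, hdisj12, hindm 0 1 (by decide) M₁ rfl Set.subset_union_left,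
      hindm 2 3 (by decide) M₂ rfl Set.subset_union_right⟩
  have hcard : (M₁ ∪ M₂).ncard = 2 * independenceNumber F := by
    have hinj1 : Set.InjOn (fun x : W => s((x, (0 : Fin 4)), (x, 1))) S := by
      intro a _ b _ h
      simp only [Sym2.eq_iff, Prod.ext_iff] at h
      tauto
    have hinj2 : Set.InjOn (fun x : W => s((x, (2 : Fin 4)), (x, 3))) S := by
      intro a _ b _ h
      simp only [Sym2.eq_iff, Prod.ext_iff] at h
      tauto
    rw [Set.ncard_union_eq hdisj12, hM₁, hM₂, Set.ncard_image_of_injOn hinj1,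
      Set.ncard_image_of_injOn hinj2, hScard]
    ring
  have hmemB : 2 * independenceNumber F ∈ B := ⟨M₁ ∪ M₂, hii, hcard⟩
  refine le_antisymm ?_ (le_csSup hBdd hmemB)
  refine csSup_le ⟨_, hmemB⟩ ?_
  rintro n ⟨M, ⟨hMmatch, N₁, N₂, rfl, hNdisj, hN1, hN2⟩, rfl⟩
  rw [Set.ncard_union_eq hNdisj]
  have := inducedMatching_ncard_le F N₁ hN1
  have := inducedMatching_ncard_le F N₂ hN2
  omega
end
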